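/- arXiv:2502.06730 — 5 statements merged into one kernel-verified Lean document; each statement's English description precedes it below -/
import Mathlib

section
/- The fractional biclique partition number of the Domino graph is exactly 5/2. -/
open Matrix Kronecker BigOperators Filter

/-- A real matrix is binary if every entry is 0 or 1. -/
def IsBinary {m n : Type*} (A : Matrix m n ℝ) : Prop :=
  ∀ i j, A i j = 0 ∨ A i j = 1

/-- A biclique of the bipartite graph of `A`: a pair of nonempty vertex sets with all
edges present. -/
def IsBiclique {m n : Type*} (A : Matrix m n ℝ) (B : Finset m × Finset n) : Prop :=
  B.1.Nonempty ∧ B.2.Nonempty ∧ ∀ i ∈ B.1, ∀ j ∈ B.2, A i j = 1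

/-- A family of bicliques partitioning the edge set of the bipartite graph of `A`. -/
def IsBicliquePartition {m n : Type*} (A : Matrix m n ℝ) {r : ℕ}
    (B : Fin r → Finset m × Finset n) : Prop :=
  (∀ t, IsBiclique A (B t)) ∧ ∀ i j, A i j = 1 → ∃! t, i ∈ (B t).1 ∧ j ∈ (B t).2

/-- A family of bicliques covering the edge set of the bipartite graph of `A`. -/
def IsBicliqueCover {m n : Type*} (A : Matrix m n ℝ) {r : ℕ}
    (B : Fin r → Finset m × Finset n) : Prop :=
  (∀ t, IsBiclique A (B t)) ∧ ∀ i j, A i j = 1 → ∃ t, i ∈ (B t).1 ∧ j ∈ (B t).2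

/-- Biclique partition number. -/
noncomputable def bp {m n : Type*} (A : Matrix m n ℝ) : ℕ :=
  sInf { r : ℕ | ∃ B : Fin r → Finset m × Finset n, IsBicliquePartition A B }

/-- Biclique cover number. -/
noncomputable def bc {m n : Type*} (A : Matrix m n ℝ) : ℕ :=
  sInf { r : ℕ | ∃ B : Fin r → Finset m × Finset n, IsBicliqueCover A B }

/-- Binary rank: minimal `r` admitting a binary factorization `A = U * V`. -/
noncomputable def binRank {m n : Type*} [Fintype m] [Fintype n] (A : Matrix m n ℝ) : ℕ :=
  sInf { r : ℕ | ∃ U : Matrix m (Fin r) ℝ, ∃ V : Matrix (Fin r) n ℝ,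
    IsBinary U ∧ IsBinary V ∧ U * V = A }

/-- Fractional biclique partition number. -/
noncomputable def bpf {m n : Type*} [Fintype m] [Fintype n] [DecidableEq m] [DecidableEq n]
    (A : Matrix m n ℝ) : ℝ :=
  sInf { c : ℝ | ∃ x : Finset m × Finset n → ℝ,
    (∀ B, 0 ≤ x B) ∧ (∀ B, ¬ IsBiclique A B → x B = 0) ∧
    (∀ i j, A i j = 1 →
      ∑ B : Finset m × Finset n, (if i ∈ B.1 ∧ j ∈ B.2 then x B else 0) = 1) ∧
    c = ∑ B : Finset m × Finset n, x B }

/-- Fractional biclique cover number. -/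
noncomputable def bcf {m n : Type*} [Fintype m] [Fintype n] [DecidableEq m] [DecidableEq n]
    (A : Matrix m n ℝ) : ℝ :=
  sInf { c : ℝ | ∃ x : Finset m × Finset n → ℝ,
    (∀ B, 0 ≤ x B) ∧ (∀ B, ¬ IsBiclique A B → x B = 0) ∧
    (∀ i j, A i j = 1 →
      1 ≤ ∑ B : Finset m × Finset n, (if i ∈ B.1 ∧ j ∈ B.2 then x B else 0)) ∧
    c = ∑ B : Finset m × Finset n, x B }

/-- `k`-th Kronecker power of `A`, indexed by tuples. -/
noncomputable def kronPow {m n : Type*} (A : Matrix m n ℝ) (k : ℕ) :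
    Matrix (Fin k → m) (Fin k → n) ℝ :=
  fun i j => ∏ t, A (i t) (j t)

/-- The bipartite adjacency matrix of the Domino graph. -/
noncomputable def D : Matrix (Fin 3) (Fin 3) ℝ := !![1,1,0;1,1,1;0,1,1]

def Zm : Fin 3 → Fin 3 → ℤ := ![![1,1,0],![1,-1,1],![0,1,1]]
def Db : Fin 3 → Fin 3 → Bool := ![![true,true,false],![true,true,true],![false,true,true]]
noncomputable def yM : Fin 3 → Fin 3 → ℝ := fun i j => (Zm i j : ℝ) / 2

theorem keyZ : ∀ B : Finset (Fin 3) × Finset (Fin 3),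
    (∀ i ∈ B.1, ∀ j ∈ B.2, Db i j = true) → (∑ i ∈ B.1, ∑ j ∈ B.2, Zm i j) ≤ 2 := by decide

theorem edge_of_D : ∀ i j, D i j = 1 → Db i j = true := by
  intro i j h
  fin_cases i <;> fin_cases j <;> simp_all [D, Db, Matrix.vecHead, Matrix.vecTail]

theorem ysum : ∑ i : Fin 3, ∑ j : Fin 3, yM i j = 5/2 := by
  simp [yM, Zm, Fin.sum_univ_succ]
  norm_num

theorem gle : ∀ B, IsBiclique D B → ∑ i ∈ B.1, ∑ j ∈ B.2, yM i j ≤ 1 := by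
  intro B hB
  have h := keyZ B (fun i hi j hj => edge_of_D i j (hB.2.2 i hi j hj))
  have e : (∑ i ∈ B.1, ∑ j ∈ B.2, yM i j)
      = ((∑ i ∈ B.1, ∑ j ∈ B.2, Zm i j : ℤ) : ℝ)/2 := by
    push_cast
    simp [yM, Finset.sum_div]
  rw [e]
  have h2 : ((∑ i ∈ B.1, ∑ j ∈ B.2, Zm i j : ℤ) : ℝ) ≤ 2 := by exact_mod_cast h
  linarith

def b1 : Finset (Fin 3) × Finset (Fin 3) := ({0,1},{0,1})
def b2 : Finset (Fin 3) × Finset (Fin 3) := ({1,2},{1,2})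
def b3 : Finset (Fin 3) × Finset (Fin 3) := ({0},{0,1})
def b4 : Finset (Fin 3) × Finset (Fin 3) := ({1},{0,2})
def b5 : Finset (Fin 3) × Finset (Fin 3) := ({2},{1,2})

theorem bic1 : IsBiclique D b1 := by
  refine ⟨⟨0, by decide⟩, ⟨0, by decide⟩, ?_⟩
  intro i hi j hj
  fin_cases hi <;> fin_cases hj <;> norm_num [D, Matrix.vecHead, Matrix.vecTail]

theorem bic2 : IsBiclique D b2 := by
  refine ⟨⟨1, by decide⟩, ⟨1, by decide⟩, ?_⟩
  intro i hi j hj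
  fin_cases hi <;> fin_cases hj <;> norm_num [D, Matrix.vecHead, Matrix.vecTail] <;> rfl

theorem bic3 : IsBiclique D b3 := by
  refine ⟨⟨0, by decide⟩, ⟨0, by decide⟩, ?_⟩
  intro i hi j hj
  fin_cases hi <;> fin_cases hj <;> norm_num [D, Matrix.vecHead, Matrix.vecTail]

theorem bic4 : IsBiclique D b4 := by
  refine ⟨⟨1, by decide⟩, ⟨0, by decide⟩, ?_⟩
  intro i hi j hj
  fin_cases hi <;> fin_cases hj <;> norm_num [D, Matrix.vecHead, Matrix.vecTail] <;> rfl

theorem bic5 : IsBiclique D b5 := by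
  refine ⟨⟨2, by decide⟩, ⟨1, by decide⟩, ?_⟩
  intro i hi j hj
  fin_cases hi <;> fin_cases hj <;> norm_num [D, Matrix.vecHead, Matrix.vecTail] <;> rfl

noncomputable def xw : Finset (Fin 3) × Finset (Fin 3) → ℝ :=
  fun B => (if B = b1 then (1/2:ℝ) else 0) + (if B = b2 then 1/2 else 0)
    + (if B = b3 then 1/2 else 0) + (if B = b4 then 1/2 else 0) + (if B = b5 then 1/2 else 0)

theorem sum_ind {α : Type*} [Fintype α] [DecidableEq α] (b : α) (c : ℝ) (P : α → Prop)
    [DecidablePred P] :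
    ∑ a : α, (if P a then (if a = b then c else 0) else 0) = if P b then c else 0 := by
  rw [Finset.sum_congr rfl (fun a _ => ?_),
    Finset.sum_ite_eq' Finset.univ b fun a => if P a then c else 0,
    if_pos (Finset.mem_univ b)]
  rcases eq_or_ne a b with rfl | h
  · simp
  · simp [h]

theorem xw_constraint : ∀ i j, D i j = 1 →
    ∑ B : Finset (Fin 3) × Finset (Fin 3),
      (if i ∈ B.1 ∧ j ∈ B.2 then xw B else 0) = 1 := by
  intro i j hij
  have expand : ∀ B ∈ Finset.univ, (if i ∈ B.1 ∧ j ∈ B.2 then xw B else 0)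
      = (if i ∈ B.1 ∧ j ∈ B.2 then (if B = b1 then (1/2:ℝ) else 0) else 0)
      + (if i ∈ B.1 ∧ j ∈ B.2 then (if B = b2 then (1/2:ℝ) else 0) else 0)
      + (if i ∈ B.1 ∧ j ∈ B.2 then (if B = b3 then (1/2:ℝ) else 0) else 0)
      + (if i ∈ B.1 ∧ j ∈ B.2 then (if B = b4 then (1/2:ℝ) else 0) else 0)
      + (if i ∈ B.1 ∧ j ∈ B.2 then (if B = b5 then (1/2:ℝ) else 0) else 0) := by
    intro B _
    unfold xw
    split
    · rfl
    · simp
  rw [Finset.sum_congr rfl expand]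
  simp only [Finset.sum_add_distrib, sum_ind]
  have hb := edge_of_D i j hij
  clear expand hij
  fin_cases i <;> fin_cases j <;>
    simp_all [Db, b1, b2, b3, b4, b5, Fin.ext_iff, Matrix.vecHead, Matrix.vecTail] <;>
    norm_num

theorem xw_total : ∑ B : Finset (Fin 3) × Finset (Fin 3), xw B = 5/2 := by
  unfold xw
  simp only [Finset.sum_add_distrib, Finset.sum_ite_eq' Finset.univ, Finset.mem_univ, if_true]
  norm_num

theorem xw_support : ∀ B, ¬ IsBiclique D B → xw B = 0 := by
  intro B h
  have h1 : B ≠ b1 := fun e => h (e ▸ bic1)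
  have h2 : B ≠ b2 := fun e => h (e ▸ bic2)
  have h3 : B ≠ b3 := fun e => h (e ▸ bic3)
  have h4 : B ≠ b4 := fun e => h (e ▸ bic4)
  have h5 : B ≠ b5 := fun e => h (e ▸ bic5)
  simp [xw, h1, h2, h3, h4, h5]

theorem xw_nonneg : ∀ B, 0 ≤ xw B := by
  intro B
  unfold xw
  positivity

theorem lower_bound : ∀ c ∈ { c : ℝ | ∃ x : Finset (Fin 3) × Finset (Fin 3) → ℝ,
    (∀ B, 0 ≤ x B) ∧ (∀ B, ¬ IsBiclique D B → x B = 0) ∧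
    (∀ i j, D i j = 1 →
      ∑ B : Finset (Fin 3) × Finset (Fin 3), (if i ∈ B.1 ∧ j ∈ B.2 then x B else 0) = 1) ∧
    c = ∑ B : Finset (Fin 3) × Finset (Fin 3), x B }, (5/2:ℝ) ≤ c := by
  rintro c ⟨x, hx0, hxs, hxc, rfl⟩
  have key : ∀ i j, (∑ B : Finset (Fin 3) × Finset (Fin 3),
      if i ∈ B.1 ∧ j ∈ B.2 then yM i j * x B else 0) = yM i j := by
    intro i j
    have e1 : ∀ B ∈ (Finset.univ : Finset (Finset (Fin 3) × Finset (Fin 3))),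
        (if i ∈ B.1 ∧ j ∈ B.2 then yM i j * x B else 0)
        = yM i j * (if i ∈ B.1 ∧ j ∈ B.2 then x B else 0) := by
      intro B _
      split
      · rfl
      · simp
    rw [Finset.sum_congr rfl e1, ← Finset.mul_sum]
    by_cases h : D i j = 1
    · rw [hxc i j h, mul_one]
    · have hy : yM i j = 0 := by
        fin_cases i <;> fin_cases j <;>
          first
            | (exfalso; apply h; norm_num [D, Matrix.vecHead, Matrix.vecTail]; done)
            | (norm_num [yM, Zm, Matrix.vecHead, Matrix.vecTail]; done)
      simp [hy]
  have T1 : ∑ i : Fin 3, ∑ j : Fin 3, (∑ B : Finset (Fin 3) × Finset (Fin 3),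
      if i ∈ B.1 ∧ j ∈ B.2 then yM i j * x B else 0) = 5/2 := by
    simp only [key]
    exact ysum
  have T2 : ∑ i : Fin 3, ∑ j : Fin 3, (∑ B : Finset (Fin 3) × Finset (Fin 3),
      if i ∈ B.1 ∧ j ∈ B.2 then yM i j * x B else 0)
      = ∑ B : Finset (Fin 3) × Finset (Fin 3), (∑ i ∈ B.1, ∑ j ∈ B.2, yM i j) * x B := by
    rw [Finset.sum_congr rfl fun i _ => Finset.sum_comm, Finset.sum_comm]
    refine Finset.sum_congr rfl fun B _ => ?_
    have step : ∀ i : Fin 3, ∑ j : Fin 3, (if i ∈ B.1 ∧ j ∈ B.2 then yM i j * x B else 0)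
        = if i ∈ B.1 then ∑ j ∈ B.2, yM i j * x B else 0 := by
      intro i
      by_cases hi : i ∈ B.1
      · simp [hi, Finset.sum_ite_mem]
      · simp [hi]
    rw [Finset.sum_congr rfl fun i _ => step i]
    simp [Finset.sum_ite_mem, Finset.sum_mul]
  have T3 : ∑ B : Finset (Fin 3) × Finset (Fin 3), (∑ i ∈ B.1, ∑ j ∈ B.2, yM i j) * x B
      ≤ ∑ B : Finset (Fin 3) × Finset (Fin 3), x B := by
    refine Finset.sum_le_sum fun B _ => ?_
    by_cases hxB : x B = 0
    · simp [hxB]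
    · have hbic : IsBiclique D B := by
        by_contra hcon
        exact hxB (hxs B hcon)
      calc (∑ i ∈ B.1, ∑ j ∈ B.2, yM i j) * x B ≤ 1 * x B :=
            mul_le_mul_of_nonneg_right (gle B hbic) (hx0 B)
        _ = x B := one_mul _
  linarith


/-- The fractional biclique partition number of the Domino is exactly 5/2. -/
theorem bpf_domino : bpf D = 5 / 2 := by
  have hmem : (5/2:ℝ) ∈ { c : ℝ | ∃ x : Finset (Fin 3) × Finset (Fin 3) → ℝ,
      (∀ B, 0 ≤ x B) ∧ (∀ B, ¬ IsBiclique D B → x B = 0) ∧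
      (∀ i j, D i j = 1 →
        ∑ B : Finset (Fin 3) × Finset (Fin 3), (if i ∈ B.1 ∧ j ∈ B.2 then x B else 0) = 1) ∧
      c = ∑ B : Finset (Fin 3) × Finset (Fin 3), x B } :=
    ⟨xw, xw_nonneg, xw_support, xw_constraint, xw_total.symm⟩
  exact le_antisymm (csInf_le ⟨5/2, fun c hc => lower_bound c hc⟩ hmem)
    (le_csInf ⟨_, hmem⟩ lower_bound)
end

section
/- The vector y assigning weight 1/2 to each edge of the Domino except weight −1/2 to the middle edge (2,5) satisfies, for every biclique B of the Domino, that the sum of y over the edges of B is at most 1; moreover the total sum of y over all edges equals 5/2. -/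
open Matrix Kronecker BigOperators Filter

lemma fin3set (s : Finset (Fin 3)) : s = (∅ : Finset (Fin 3)) ∨ s = ({0} : Finset (Fin 3)) ∨
    s = ({1} : Finset (Fin 3)) ∨ s = ({2} : Finset (Fin 3)) ∨ s = ({0,1} : Finset (Fin 3)) ∨
    s = ({0,2} : Finset (Fin 3)) ∨ s = ({1,2} : Finset (Fin 3)) ∨
    s = ({0,1,2} : Finset (Fin 3)) := by revert s; decide


/-- The dual witness for the Domino: weight 1/2 on each edge, except -1/2 on the middle
edge (2,5), i.e. matrix position (1,1); its sum over every biclique is at most 1,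
and its total over all edges is 5/2. -/
theorem domino_dual_witness
    (y : Fin 3 × Fin 3 → ℝ)
    (hy : y = fun e => if e = (1, 1) then -(1 / 2) else 1 / 2) :
    (∀ B : Finset (Fin 3) × Finset (Fin 3), IsBiclique D B →
      ∑ i ∈ B.1, ∑ j ∈ B.2, y (i, j) ≤ 1) ∧
    (∑ i : Fin 3, ∑ j : Fin 3, (if D i j = 1 then y (i, j) else 0)) = 5 / 2 := by
  subst hy
  constructor
  · rintro ⟨S, T⟩ ⟨hS, hT, hall⟩
    rcases fin3set S with rfl|rfl|rfl|rfl|rfl|rfl|rfl|rfl <;>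
      rcases fin3set T with rfl|rfl|rfl|rfl|rfl|rfl|rfl|rfl <;>
      simp_all [D, Finset.sum_insert, Prod.ext_iff] <;> norm_num
  · norm_num [D, Fin.sum_univ_three, Prod.ext_iff, Matrix.vecHead, Matrix.vecTail, Matrix.cons_val_two, (by decide : (2:Fin 3) ≠ 1), (by decide : (0:Fin 3) ≠ 1)]
end

section
/- The fractional biclique partition number of the Kronecker square of the Domino satisfies bp_f(D ⊗ D) ≤ 6; in particular bp_f(D ⊗ D) < bp_f(D)², so the fractional binary rank is not multiplicative with respect to the Kronecker product. -/
open Matrix Kronecker BigOperators Filter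

set_option maxRecDepth 100000

section Helpers

variable {m n : Type*} [Fintype m] [Fintype n] [DecidableEq m] [DecidableEq n]

lemma bpf_set_bdd (A : Matrix m n ℝ) : BddBelow { c : ℝ | ∃ x : Finset m × Finset n → ℝ,
    (∀ B, 0 ≤ x B) ∧ (∀ B, ¬ IsBiclique A B → x B = 0) ∧
    (∀ i j, A i j = 1 →
      ∑ B : Finset m × Finset n, (if i ∈ B.1 ∧ j ∈ B.2 then x B else 0) = 1) ∧
    c = ∑ B : Finset m × Finset n, x B } := by
  refine ⟨0, ?_⟩
  rintro c ⟨x, hx0, -, -, rfl⟩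
  exact Finset.sum_nonneg fun B _ => hx0 B

lemma mem_bpf_set_of_family (A : Matrix m n ℝ) {N : ℕ}
    (L : Fin N → Finset m × Finset n) (w : Fin N → ℝ)
    (hw : ∀ k, 0 ≤ w k) (hb : ∀ k, IsBiclique A (L k))
    (hcov : ∀ i j, A i j = 1 →
      ∑ k, (if i ∈ (L k).1 ∧ j ∈ (L k).2 then w k else 0) = 1) :
    (∑ k, w k) ∈ { c : ℝ | ∃ x : Finset m × Finset n → ℝ,
    (∀ B, 0 ≤ x B) ∧ (∀ B, ¬ IsBiclique A B → x B = 0) ∧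
    (∀ i j, A i j = 1 →
      ∑ B : Finset m × Finset n, (if i ∈ B.1 ∧ j ∈ B.2 then x B else 0) = 1) ∧
    c = ∑ B : Finset m × Finset n, x B } := by
  refine ⟨fun B => ∑ k, if B = L k then w k else 0, ?_, ?_, ?_, ?_⟩
  · intro B
    refine Finset.sum_nonneg fun k _ => ?_
    split
    · exact hw k
    · exact le_rfl
  · intro B hB
    refine Finset.sum_eq_zero fun k _ => ?_
    rw [if_neg]
    rintro rfl
    exact hB (hb k)
  · intro i j hij
    have key : ∀ B : Finset m × Finset n,
        (if i ∈ B.1 ∧ j ∈ B.2 then ∑ k, if B = L k then w k else 0 else 0)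
        = ∑ k, if B = L k then (if i ∈ (L k).1 ∧ j ∈ (L k).2 then w k else 0) else 0 := by
      intro B
      by_cases h : i ∈ B.1 ∧ j ∈ B.2
      · rw [if_pos h]
        refine Finset.sum_congr rfl fun k _ => ?_
        by_cases hk : B = L k
        · subst hk; rw [if_pos rfl, if_pos rfl, if_pos h]
        · rw [if_neg hk, if_neg hk]
      · rw [if_neg h]
        refine (Finset.sum_eq_zero fun k _ => ?_).symm
        by_cases hk : B = L k
        · subst hk; rw [if_pos rfl, if_neg h]
        · rw [if_neg hk]
    rw [Finset.sum_congr rfl fun B _ => key B, Finset.sum_comm]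
    rw [← hcov i j hij]
    refine Finset.sum_congr rfl fun k _ => ?_
    rw [Finset.sum_ite_eq' Finset.univ (L k)]
    simp
  · rw [Finset.sum_comm]
    simp

lemma bpf_le_of_family (A : Matrix m n ℝ) {N : ℕ}
    (L : Fin N → Finset m × Finset n) (w : Fin N → ℝ)
    (hw : ∀ k, 0 ≤ w k) (hb : ∀ k, IsBiclique A (L k))
    (hcov : ∀ i j, A i j = 1 →
      ∑ k, (if i ∈ (L k).1 ∧ j ∈ (L k).2 then w k else 0) = 1) :
    bpf A ≤ ∑ k, w k :=
  csInf_le (bpf_set_bdd A) (mem_bpf_set_of_family A L w hw hb hcov)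

lemma le_bpf_of_dual (A : Matrix m n ℝ) (y : m → n → ℝ)
    (hy0 : ∀ i j, A i j ≠ 1 → y i j = 0)
    (hyb : ∀ B : Finset m × Finset n, IsBiclique A B →
      (∑ i ∈ B.1, ∑ j ∈ B.2, y i j) ≤ 1)
    (hS : { c : ℝ | ∃ x : Finset m × Finset n → ℝ,
      (∀ B, 0 ≤ x B) ∧ (∀ B, ¬ IsBiclique A B → x B = 0) ∧
      (∀ i j, A i j = 1 →
        ∑ B : Finset m × Finset n, (if i ∈ B.1 ∧ j ∈ B.2 then x B else 0) = 1) ∧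
      c = ∑ B : Finset m × Finset n, x B }.Nonempty) :
    (∑ i, ∑ j, y i j) ≤ bpf A := by
  refine le_csInf hS ?_
  rintro c ⟨x, hx0, hxb, hxc, rfl⟩
  have step1 : (∑ i, ∑ j, y i j)
      = ∑ i, ∑ j, y i j * ∑ B : Finset m × Finset n,
          (if i ∈ B.1 ∧ j ∈ B.2 then x B else 0) := by
    refine Finset.sum_congr rfl fun i _ => Finset.sum_congr rfl fun j _ => ?_
    by_cases h : A i j = 1
    · rw [hxc i j h, mul_one]
    · rw [hy0 i j h, zero_mul]
  have step2 : (∑ i, ∑ j, y i j * ∑ B : Finset m × Finset n,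
          (if i ∈ B.1 ∧ j ∈ B.2 then x B else 0))
      = ∑ B : Finset m × Finset n, x B * (∑ i ∈ B.1, ∑ j ∈ B.2, y i j) := by
    simp_rw [Finset.mul_sum, mul_ite, mul_zero]
    conv_lhs =>
      enter [2, i]
      rw [Finset.sum_comm]
    rw [Finset.sum_comm]
    refine Finset.sum_congr rfl fun B _ => ?_
    have h1 : ∀ i, (∑ j, if i ∈ B.1 ∧ j ∈ B.2 then y i j * x B else 0)
        = if i ∈ B.1 then ∑ j ∈ B.2, y i j * x B else 0 := by
      intro i
      by_cases hi : i ∈ B.1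
      · simp only [hi, true_and, if_true]
        rw [Finset.sum_ite_mem, Finset.univ_inter]
      · simp [hi]
    calc (∑ i, ∑ j, if i ∈ B.1 ∧ j ∈ B.2 then y i j * x B else 0)
        = ∑ i, if i ∈ B.1 then ∑ j ∈ B.2, y i j * x B else 0 :=
          Finset.sum_congr rfl fun i _ => h1 i
      _ = ∑ i ∈ B.1, ∑ j ∈ B.2, y i j * x B := by
          rw [Finset.sum_ite_mem, Finset.univ_inter]
      _ = ∑ i ∈ B.1, ∑ j ∈ B.2, x B * y i j :=
          Finset.sum_congr rfl fun i _ =>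
            Finset.sum_congr rfl fun j _ => mul_comm _ _
  rw [step1, step2]
  refine Finset.sum_le_sum fun B _ => ?_
  by_cases hx : x B = 0
  · rw [hx, zero_mul]
  · have hbi : IsBiclique A B := by
      by_contra h
      exact hx (hxb B h)
    have := hyb B hbi
    nlinarith [hx0 B]

end Helpers

/-! ### Concrete data for the Domino -/

def bD : Fin 3 → Fin 3 → Bool := fun i j => (i.val ≤ j.val + 1) && (j.val ≤ i.val + 1)

lemma D_one : ∀ i j, bD i j = true → D i j = 1 := by
  intro i j
  fin_cases i <;> fin_cases j <;> simp [bD, D, Matrix.vecHead, Matrix.vecTail]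

lemma D_zero : ∀ i j, bD i j = false → D i j = 0 := by
  intro i j
  fin_cases i <;> fin_cases j <;> simp [bD, D, Matrix.vecHead, Matrix.vecTail]

lemma D_edge : ∀ i j, D i j = 1 → bD i j = true := by
  intro i j h
  rcases Bool.eq_false_or_eq_true (bD i j) with h1 | h1
  · exact h1
  · rw [D_zero _ _ h1] at h; norm_num at h

lemma DK_one : ∀ i j : Fin 3 × Fin 3, bD i.1 j.1 = true → bD i.2 j.2 = true →
    (D ⊗ₖ D) i j = 1 := by
  intro i j h1 h2
  simp [Matrix.kroneckerMap_apply, D_one _ _ h1, D_one _ _ h2]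

lemma DK_edge : ∀ i j : Fin 3 × Fin 3, (D ⊗ₖ D) i j = 1 →
    (bD i.1 j.1 && bD i.2 j.2) = true := by
  intro i j h
  rw [Matrix.kroneckerMap_apply] at h
  rcases Bool.eq_false_or_eq_true (bD i.1 j.1) with h1 | h1
  case inr => rw [D_zero _ _ h1, zero_mul] at h; norm_num at h
  rcases Bool.eq_false_or_eq_true (bD i.2 j.2) with h2 | h2
  case inr => rw [D_zero _ _ h2, mul_zero] at h; norm_num at h
  rw [Bool.and_eq_true]; exact ⟨h1, h2⟩

lemma isBiclique_D (R C : Finset (Fin 3)) (h1 : R.Nonempty) (h2 : C.Nonempty)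
    (h3 : ∀ i ∈ R, ∀ j ∈ C, bD i j = true) : IsBiclique D (R, C) :=
  ⟨h1, h2, fun i hi j hj => D_one i j (h3 i hi j hj)⟩

lemma isBiclique_DK (R C : Finset (Fin 3 × Fin 3)) (h1 : R.Nonempty) (h2 : C.Nonempty)
    (h3 : ∀ i ∈ R, ∀ j ∈ C, (bD i.1 j.1 && bD i.2 j.2) = true) :
    IsBiclique (D ⊗ₖ D) (R, C) :=
  ⟨h1, h2, fun i hi j hj => by
    have h := h3 i hi j hj
    rw [Bool.and_eq_true] at h
    exact DK_one i j h.1 h.2⟩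

/-! ### The primal family for `D ⊗ₖ D` of total weight 6 -/

def LK : Fin 46 → Finset (Fin 3 × Fin 3) × Finset (Fin 3 × Fin 3) := ![
  ({((1:Fin 3),(0:Fin 3)), ((2:Fin 3),(0:Fin 3)), ((2:Fin 3),(2:Fin 3))}, {((1:Fin 3),(1:Fin 3)), ((2:Fin 3),(1:Fin 3))}),
  ({((1:Fin 3),(2:Fin 3)), ((2:Fin 3),(0:Fin 3)), ((2:Fin 3),(2:Fin 3))}, {((1:Fin 3),(1:Fin 3)), ((2:Fin 3),(1:Fin 3))}),
  ({((0:Fin 3),(0:Fin 3)), ((1:Fin 3),(0:Fin 3)), ((1:Fin 3),(1:Fin 3))}, {((0:Fin 3),(0:Fin 3)), ((0:Fin 3),(1:Fin 3)), ((1:Fin 3),(1:Fin 3))}),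
  ({((0:Fin 3),(1:Fin 3)), ((0:Fin 3),(2:Fin 3)), ((2:Fin 3),(2:Fin 3))}, {((1:Fin 3),(1:Fin 3)), ((1:Fin 3),(2:Fin 3))}),
  ({((0:Fin 3),(1:Fin 3)), ((0:Fin 3),(2:Fin 3)), ((2:Fin 3),(1:Fin 3)), ((2:Fin 3),(2:Fin 3))}, {((1:Fin 3),(1:Fin 3)), ((1:Fin 3),(2:Fin 3))}),
  ({((0:Fin 3),(1:Fin 3)), ((0:Fin 3),(2:Fin 3)), ((1:Fin 3),(2:Fin 3))}, {((0:Fin 3),(1:Fin 3)), ((0:Fin 3),(2:Fin 3)), ((1:Fin 3),(1:Fin 3))}),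
  ({((1:Fin 3),(0:Fin 3)), ((1:Fin 3),(1:Fin 3))}, {((0:Fin 3),(0:Fin 3)), ((0:Fin 3),(1:Fin 3)), ((2:Fin 3),(0:Fin 3)), ((2:Fin 3),(1:Fin 3))}),
  ({((0:Fin 3),(1:Fin 3)), ((0:Fin 3),(2:Fin 3)), ((1:Fin 3),(2:Fin 3))}, {((0:Fin 3),(1:Fin 3)), ((0:Fin 3),(2:Fin 3))}),
  ({((0:Fin 3),(0:Fin 3)), ((0:Fin 3),(1:Fin 3))}, {((0:Fin 3),(0:Fin 3)), ((1:Fin 3),(0:Fin 3)), ((1:Fin 3),(1:Fin 3))}),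
  ({((1:Fin 3),(1:Fin 3)), ((1:Fin 3),(2:Fin 3))}, {((0:Fin 3),(1:Fin 3)), ((0:Fin 3),(2:Fin 3)), ((2:Fin 3),(1:Fin 3)), ((2:Fin 3),(2:Fin 3))}),
  ({((1:Fin 3),(0:Fin 3)), ((1:Fin 3),(1:Fin 3)), ((2:Fin 3),(0:Fin 3)), ((2:Fin 3),(1:Fin 3))}, {((1:Fin 3),(1:Fin 3)), ((2:Fin 3),(0:Fin 3)), ((2:Fin 3),(1:Fin 3))}),
  ({((0:Fin 3),(1:Fin 3)), ((0:Fin 3),(2:Fin 3))}, {((0:Fin 3),(1:Fin 3)), ((0:Fin 3),(2:Fin 3)), ((1:Fin 3),(1:Fin 3)), ((1:Fin 3),(2:Fin 3))}),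
  ({((1:Fin 3),(0:Fin 3)), ((1:Fin 3),(1:Fin 3)), ((2:Fin 3),(0:Fin 3))}, {((2:Fin 3),(0:Fin 3)), ((2:Fin 3),(1:Fin 3))}),
  ({((0:Fin 3),(0:Fin 3)), ((2:Fin 3),(0:Fin 3)), ((2:Fin 3),(1:Fin 3))}, {((1:Fin 3),(0:Fin 3)), ((1:Fin 3),(1:Fin 3))}),
  ({((0:Fin 3),(0:Fin 3)), ((0:Fin 3),(1:Fin 3)), ((1:Fin 3),(0:Fin 3)), ((1:Fin 3),(1:Fin 3))}, {((0:Fin 3),(0:Fin 3)), ((0:Fin 3),(1:Fin 3)), ((1:Fin 3),(0:Fin 3)), ((1:Fin 3),(1:Fin 3))}),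
  ({((0:Fin 3),(0:Fin 3)), ((0:Fin 3),(2:Fin 3)), ((1:Fin 3),(0:Fin 3))}, {((0:Fin 3),(1:Fin 3)), ((1:Fin 3),(1:Fin 3))}),
  ({((0:Fin 3),(1:Fin 3)), ((1:Fin 3),(1:Fin 3))}, {((0:Fin 3),(0:Fin 3)), ((0:Fin 3),(2:Fin 3)), ((1:Fin 3),(1:Fin 3))}),
  ({((1:Fin 3),(0:Fin 3)), ((2:Fin 3),(0:Fin 3))}, {((1:Fin 3),(0:Fin 3)), ((1:Fin 3),(1:Fin 3)), ((2:Fin 3),(0:Fin 3)), ((2:Fin 3),(1:Fin 3))}),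
  ({((0:Fin 3),(2:Fin 3)), ((1:Fin 3),(1:Fin 3)), ((1:Fin 3),(2:Fin 3))}, {((0:Fin 3),(1:Fin 3)), ((0:Fin 3),(2:Fin 3))}),
  ({((0:Fin 3),(1:Fin 3)), ((0:Fin 3),(2:Fin 3)), ((1:Fin 3),(1:Fin 3))}, {((0:Fin 3),(2:Fin 3)), ((1:Fin 3),(1:Fin 3)), ((1:Fin 3),(2:Fin 3))}),
  ({((0:Fin 3),(0:Fin 3)), ((0:Fin 3),(1:Fin 3)), ((2:Fin 3),(0:Fin 3)), ((2:Fin 3),(1:Fin 3))}, {((1:Fin 3),(0:Fin 3)), ((1:Fin 3),(1:Fin 3))}),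
  ({((0:Fin 3),(0:Fin 3)), ((1:Fin 3),(0:Fin 3))}, {((0:Fin 3),(0:Fin 3)), ((0:Fin 3),(1:Fin 3)), ((1:Fin 3),(0:Fin 3))}),
  ({((1:Fin 3),(0:Fin 3)), ((2:Fin 3),(0:Fin 3)), ((2:Fin 3),(1:Fin 3))}, {((2:Fin 3),(0:Fin 3)), ((2:Fin 3),(1:Fin 3))}),
  ({((0:Fin 3),(0:Fin 3)), ((0:Fin 3),(1:Fin 3)), ((1:Fin 3),(1:Fin 3))}, {((0:Fin 3),(0:Fin 3)), ((0:Fin 3),(1:Fin 3)), ((1:Fin 3),(0:Fin 3))}),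
  ({((1:Fin 3),(0:Fin 3)), ((1:Fin 3),(2:Fin 3)), ((2:Fin 3),(0:Fin 3)), ((2:Fin 3),(2:Fin 3))}, {((1:Fin 3),(1:Fin 3)), ((2:Fin 3),(1:Fin 3))}),
  ({((1:Fin 3),(1:Fin 3)), ((2:Fin 3),(1:Fin 3)), ((2:Fin 3),(2:Fin 3))}, {((1:Fin 3),(2:Fin 3)), ((2:Fin 3),(1:Fin 3)), ((2:Fin 3),(2:Fin 3))}),
  ({((0:Fin 3),(0:Fin 3)), ((0:Fin 3),(1:Fin 3)), ((1:Fin 3),(0:Fin 3))}, {((0:Fin 3),(0:Fin 3)), ((0:Fin 3),(1:Fin 3)), ((1:Fin 3),(0:Fin 3))}),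
  ({((0:Fin 3),(1:Fin 3)), ((1:Fin 3),(1:Fin 3))}, {((0:Fin 3),(0:Fin 3)), ((0:Fin 3),(2:Fin 3)), ((1:Fin 3),(0:Fin 3)), ((1:Fin 3),(2:Fin 3))}),
  ({((1:Fin 3),(1:Fin 3)), ((2:Fin 3),(1:Fin 3))}, {((1:Fin 3),(0:Fin 3)), ((2:Fin 3),(0:Fin 3)), ((2:Fin 3),(2:Fin 3))}),
  ({((1:Fin 3),(1:Fin 3)), ((2:Fin 3),(0:Fin 3)), ((2:Fin 3),(1:Fin 3))}, {((1:Fin 3),(0:Fin 3)), ((1:Fin 3),(1:Fin 3)), ((2:Fin 3),(0:Fin 3))}),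
  ({((0:Fin 3),(2:Fin 3)), ((1:Fin 3),(2:Fin 3))}, {((0:Fin 3),(1:Fin 3)), ((0:Fin 3),(2:Fin 3)), ((1:Fin 3),(1:Fin 3)), ((1:Fin 3),(2:Fin 3))}),
  ({((1:Fin 3),(0:Fin 3)), ((1:Fin 3),(1:Fin 3)), ((2:Fin 3),(0:Fin 3)), ((2:Fin 3),(1:Fin 3))}, {((1:Fin 3),(0:Fin 3)), ((2:Fin 3),(0:Fin 3)), ((2:Fin 3),(1:Fin 3))}),
  ({((0:Fin 3),(1:Fin 3)), ((0:Fin 3),(2:Fin 3)), ((1:Fin 3),(1:Fin 3)), ((1:Fin 3),(2:Fin 3))}, {((0:Fin 3),(1:Fin 3)), ((0:Fin 3),(2:Fin 3)), ((1:Fin 3),(2:Fin 3))}),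
  ({((2:Fin 3),(1:Fin 3)), ((2:Fin 3),(2:Fin 3))}, {((1:Fin 3),(1:Fin 3)), ((1:Fin 3),(2:Fin 3)), ((2:Fin 3),(2:Fin 3))}),
  ({((1:Fin 3),(1:Fin 3)), ((1:Fin 3),(2:Fin 3)), ((2:Fin 3),(1:Fin 3)), ((2:Fin 3),(2:Fin 3))}, {((1:Fin 3),(2:Fin 3)), ((2:Fin 3),(2:Fin 3))}),
  ({((1:Fin 3),(2:Fin 3)), ((2:Fin 3),(2:Fin 3))}, {((1:Fin 3),(1:Fin 3)), ((2:Fin 3),(1:Fin 3)), ((2:Fin 3),(2:Fin 3))}),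
  ({((0:Fin 3),(1:Fin 3)), ((0:Fin 3),(2:Fin 3)), ((1:Fin 3),(1:Fin 3)), ((1:Fin 3),(2:Fin 3))}, {((0:Fin 3),(2:Fin 3))}),
  ({((2:Fin 3),(0:Fin 3)), ((2:Fin 3),(1:Fin 3))}, {((1:Fin 3),(0:Fin 3)), ((1:Fin 3),(1:Fin 3)), ((2:Fin 3),(0:Fin 3))}),
  ({((0:Fin 3),(0:Fin 3)), ((0:Fin 3),(2:Fin 3)), ((1:Fin 3),(0:Fin 3)), ((1:Fin 3),(2:Fin 3))}, {((0:Fin 3),(1:Fin 3)), ((1:Fin 3),(1:Fin 3))}),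
  ({((1:Fin 3),(2:Fin 3)), ((2:Fin 3),(1:Fin 3)), ((2:Fin 3),(2:Fin 3))}, {((1:Fin 3),(1:Fin 3)), ((1:Fin 3),(2:Fin 3)), ((2:Fin 3),(1:Fin 3)), ((2:Fin 3),(2:Fin 3))}),
  ({((1:Fin 3),(1:Fin 3)), ((2:Fin 3),(1:Fin 3))}, {((1:Fin 3),(2:Fin 3)), ((2:Fin 3),(0:Fin 3)), ((2:Fin 3),(2:Fin 3))}),
  ({((0:Fin 3),(0:Fin 3)), ((0:Fin 3),(1:Fin 3)), ((1:Fin 3),(0:Fin 3))}, {((0:Fin 3),(0:Fin 3)), ((0:Fin 3),(1:Fin 3)), ((1:Fin 3),(1:Fin 3))}),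
  ({((0:Fin 3),(2:Fin 3)), ((1:Fin 3),(1:Fin 3))}, {((0:Fin 3),(1:Fin 3)), ((0:Fin 3),(2:Fin 3)), ((1:Fin 3),(2:Fin 3))}),
  ({((1:Fin 3),(1:Fin 3)), ((1:Fin 3),(2:Fin 3)), ((2:Fin 3),(2:Fin 3))}, {((1:Fin 3),(1:Fin 3)), ((2:Fin 3),(1:Fin 3)), ((2:Fin 3),(2:Fin 3))}),
  ({((1:Fin 3),(0:Fin 3)), ((1:Fin 3),(1:Fin 3))}, {((0:Fin 3),(0:Fin 3)), ((2:Fin 3),(0:Fin 3))}),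
  ({((1:Fin 3),(2:Fin 3)), ((2:Fin 3),(1:Fin 3)), ((2:Fin 3),(2:Fin 3))}, {((1:Fin 3),(2:Fin 3)), ((2:Fin 3),(1:Fin 3)), ((2:Fin 3),(2:Fin 3))})]

def zK : Fin 46 → ℕ := ![31, 39, 281, 72, 214, 99, 39, 101, 112, 151, 72, 38, 72, 206, 78, 101, 75, 214, 75, 101, 80, 44, 142, 39, 81, 120, 315, 250, 214, 70, 238, 223, 199, 31, 120, 89, 11, 81, 11, 120, 72, 5, 12, 197, 112, 197]

lemma zK_total : (∑ k, zK k) = 5244 := by decide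

lemma LK_ne1 : ∀ k, (LK k).1.Nonempty := by decide
lemma LK_ne2 : ∀ k, (LK k).2.Nonempty := by decide
lemma LK_bic : ∀ k, ∀ i ∈ (LK k).1, ∀ j ∈ (LK k).2,
    (bD i.1 j.1 && bD i.2 j.2) = true := by decide
lemma LK_cov : ∀ i j : Fin 3 × Fin 3, (bD i.1 j.1 && bD i.2 j.2) = true →
    (∑ k, if i ∈ (LK k).1 ∧ j ∈ (LK k).2 then zK k else 0) = 874 := by decide

noncomputable def wR : Fin 46 → ℝ := fun k => (zK k : ℝ) / 874

lemma sum_ite_wR (P : Fin 46 → Prop) [DecidablePred P] :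
    (∑ k, (if P k then wR k else 0))
      = ((∑ k, if P k then zK k else 0 : ℕ) : ℝ) / 874 := by
  rw [Nat.cast_sum, Finset.sum_div]
  refine Finset.sum_congr rfl fun k _ => ?_
  by_cases hc : P k <;> simp [hc, wR]

lemma bpf_DK_le : bpf (D ⊗ₖ D) ≤ 6 := by
  have h := bpf_le_of_family (D ⊗ₖ D) LK wR
    (fun k => by unfold wR; positivity)
    (fun k => isBiclique_DK _ _ (LK_ne1 k) (LK_ne2 k) (LK_bic k))
    (by
      intro i j hij
      have hb := DK_edge i j hij
      rw [sum_ite_wR, LK_cov i j hb]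
      norm_num)
  have ht : (∑ k, wR k) = 6 := by
    have : (∑ k, wR k) = ((∑ k, zK k : ℕ) : ℝ) / 874 := by
      rw [Nat.cast_sum, Finset.sum_div]
      exact Finset.sum_congr rfl fun k _ => rfl
    rw [this, zK_total]
    norm_num
  rwa [ht] at h

/-! ### The dual certificate for `D` -/

noncomputable def yD : Fin 3 → Fin 3 → ℝ :=
  fun i j => !![(1:ℝ)/2, 1/2, 0; 1/2, -(1/2), 1/2; 0, 1/2, 1/2] i j

lemma yD_zero : ∀ i j, D i j ≠ 1 → yD i j = 0 := by
  intro i j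
  fin_cases i <;> fin_cases j <;>
    simp [D, yD, Matrix.vecHead, Matrix.vecTail]

lemma yD_total : ∑ i, ∑ j, yD i j = 5/2 := by
  simp [Fin.sum_univ_succ, yD]
  norm_num

lemma yD_bound : ∀ B : Finset (Fin 3) × Finset (Fin 3), IsBiclique D B →
    (∑ i ∈ B.1, ∑ j ∈ B.2, yD i j) ≤ 1 := by
  rintro ⟨R, C⟩ ⟨h1, h2, h3⟩
  simp only at h3
  fin_cases R <;> fin_cases C <;>
    simp_all [D, yD, Matrix.vecHead, Matrix.vecTail] <;> norm_num

/-! ### A feasible solution for `D` (nonemptiness of the LP set) -/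

def L7 : Fin 7 → Finset (Fin 3) × Finset (Fin 3) :=
  ![({0},{0}), ({0},{1}), ({1},{0}), ({1},{1}), ({1},{2}), ({2},{1}), ({2},{2})]

lemma L7_ne1 : ∀ k, (L7 k).1.Nonempty := by decide
lemma L7_ne2 : ∀ k, (L7 k).2.Nonempty := by decide
lemma L7_bic : ∀ k, ∀ i ∈ (L7 k).1, ∀ j ∈ (L7 k).2, bD i j = true := by decide
lemma L7_cov : ∀ i j : Fin 3, bD i j = true →
    (∑ k, if i ∈ (L7 k).1 ∧ j ∈ (L7 k).2 then (1:ℕ) else 0) = 1 := by decide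

lemma sum_ite_one (P : Fin 7 → Prop) [DecidablePred P] :
    (∑ k, (if P k then (1:ℝ) else 0))
      = ((∑ k, if P k then (1:ℕ) else 0 : ℕ) : ℝ) := by
  rw [Nat.cast_sum]
  refine Finset.sum_congr rfl fun k _ => ?_
  by_cases hc : P k <;> simp [hc]

lemma bpf_D_ge : (5/2 : ℝ) ≤ bpf D := by
  have hS : { c : ℝ | ∃ x : Finset (Fin 3) × Finset (Fin 3) → ℝ,
      (∀ B, 0 ≤ x B) ∧ (∀ B, ¬ IsBiclique D B → x B = 0) ∧
      (∀ i j, D i j = 1 →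
        ∑ B : Finset (Fin 3) × Finset (Fin 3), (if i ∈ B.1 ∧ j ∈ B.2 then x B else 0) = 1) ∧
      c = ∑ B : Finset (Fin 3) × Finset (Fin 3), x B }.Nonempty := by
    refine ⟨∑ _k : Fin 7, (1:ℝ), mem_bpf_set_of_family D L7 (fun _ => (1:ℝ))
      (fun _ => zero_le_one)
      (fun k => isBiclique_D _ _ (L7_ne1 k) (L7_ne2 k) (L7_bic k)) ?_⟩
    intro i j hij
    rw [sum_ite_one, L7_cov i j (D_edge i j hij)]
    norm_num
  have h := le_bpf_of_dual D yD yD_zero yD_bound hS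
  rwa [yD_total] at h

/-- `bpf` is not multiplicative: for the Domino, `bpf (D ⊗ D) ≤ 6 < (bpf D)^2`. -/
theorem bpf_domino_square : bpf (D ⊗ₖ D) ≤ 6 ∧ bpf (D ⊗ₖ D) < (bpf D) ^ 2 := by
  refine ⟨bpf_DK_le, ?_⟩
  have h1 := bpf_DK_le
  have h2 := bpf_D_ge
  nlinarith [h1, h2]
end

section
/- For arbitrary binary matrices A and A', bp_f(A ⊗ A') ≥ bc_f(A) · bp_f(A'). -/
open Matrix Kronecker BigOperators Filter

/- ### Auxiliary lemmas -/

private lemma binary_mul_one {a b : ℝ} (ha : a = 0 ∨ a = 1) (hb : b = 0 ∨ b = 1)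
    (h : a * b = 1) : a = 1 ∧ b = 1 := by
  rcases ha with h1 | h1 <;> rcases hb with h2 | h2 <;> simp_all

private lemma sum_proj_collapse {α β : Type*} [Fintype α] [Fintype β] [DecidableEq β]
    (f : α → β) (x : α → ℝ) (P : β → Prop) [DecidablePred P] :
    ∑ b, (if P b then (∑ a, if f a = b then x a else 0) else 0)
      = ∑ a, (if P (f a) then x a else 0) := by
  have h1 : ∀ b : β, (if P b then (∑ a, if f a = b then x a else 0) else 0)
      = ∑ a, if f a = b then (if P b then x a else 0) else 0 := by
    intro b
    by_cases h : P b
    · simp [h]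
    · simp [h]
  rw [Finset.sum_congr rfl fun b _ => h1 b, Finset.sum_comm]
  refine Finset.sum_congr rfl fun a _ => ?_
  have h2 : ∀ b : β, (if f a = b then (if P b then x a else 0) else 0)
      = if f a = b then (if P (f a) then x a else 0) else 0 := by
    intro b; by_cases h : f a = b <;> simp [h]
  rw [Finset.sum_congr rfl fun b _ => h2 b, Finset.sum_ite_eq]
  simp

private lemma sum_proj_total {α β : Type*} [Fintype α] [Fintype β] [DecidableEq β]
    (f : α → β) (x : α → ℝ) :
    ∑ b, (∑ a, if f a = b then x a else 0) = ∑ a, x a := by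
  rw [Finset.sum_comm]
  refine Finset.sum_congr rfl fun a _ => ?_
  rw [Finset.sum_ite_eq]
  simp

/-- A feasible fractional biclique partition always exists (singleton bicliques). -/
private lemma bpf_feasible {μ ν : Type*} [Fintype μ] [Fintype ν] [DecidableEq μ] [DecidableEq ν]
    (M : Matrix μ ν ℝ) :
    ∃ x : Finset μ × Finset ν → ℝ,
      (∀ B, 0 ≤ x B) ∧ (∀ B, ¬ IsBiclique M B → x B = 0) ∧
      (∀ i j, M i j = 1 →
        ∑ B : Finset μ × Finset ν, (if i ∈ B.1 ∧ j ∈ B.2 then x B else 0) = 1) := by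
  classical
  refine ⟨fun B => if ∃ i j, B = ({i}, {j}) ∧ M i j = 1 then 1 else 0, ?_, ?_, ?_⟩
  · intro B; dsimp only; split <;> norm_num
  · intro B hB
    dsimp only
    rw [if_neg]
    rintro ⟨i, j, rfl, hij⟩
    exact hB ⟨⟨i, Finset.mem_singleton_self i⟩, ⟨j, Finset.mem_singleton_self j⟩,
      fun a ha b hb => by
        rw [Finset.mem_singleton] at ha hb; subst ha; subst hb; exact hij⟩
  · intro i j hij
    dsimp only
    have key : ∀ B : Finset μ × Finset ν,
        (if i ∈ B.1 ∧ j ∈ B.2 then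
          (if ∃ i' j', B = ({i'}, {j'}) ∧ M i' j' = 1 then (1:ℝ) else 0) else 0)
        = if B = (({i} : Finset μ), ({j} : Finset ν)) then 1 else 0 := by
      intro B
      by_cases hB : B = (({i} : Finset μ), ({j} : Finset ν))
      · subst hB
        rw [if_pos ⟨Finset.mem_singleton_self i, Finset.mem_singleton_self j⟩,
          if_pos ⟨i, j, rfl, hij⟩, if_pos rfl]
      · rw [if_neg hB]
        by_cases h1 : i ∈ B.1 ∧ j ∈ B.2
        · rw [if_pos h1, if_neg]
          rintro ⟨i', j', rfl, -⟩
          obtain ⟨ha, hb⟩ := h1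
          rw [Finset.mem_singleton] at ha hb
          subst ha; subst hb
          exact hB rfl
        · rw [if_neg h1]
    rw [Finset.sum_congr rfl fun B _ => key B]
    simp

private lemma bpf_nonneg {μ ν : Type*} [Fintype μ] [Fintype ν] [DecidableEq μ] [DecidableEq ν]
    (M : Matrix μ ν ℝ) : 0 ≤ bpf M := by
  apply Real.sInf_nonneg
  rintro c ⟨x, hx0, -, -, rfl⟩
  exact Finset.sum_nonneg fun B _ => hx0 B

private lemma bpf_le {μ ν : Type*} [Fintype μ] [Fintype ν] [DecidableEq μ] [DecidableEq ν]
    (M : Matrix μ ν ℝ) {x : Finset μ × Finset ν → ℝ}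
    (hx0 : ∀ B, 0 ≤ x B) (hxb : ∀ B, ¬ IsBiclique M B → x B = 0)
    (hxe : ∀ i j, M i j = 1 →
      ∑ B : Finset μ × Finset ν, (if i ∈ B.1 ∧ j ∈ B.2 then x B else 0) = 1) :
    bpf M ≤ ∑ B : Finset μ × Finset ν, x B := by
  apply csInf_le
  · refine ⟨0, ?_⟩
    rintro c ⟨x', hx0', -, -, rfl⟩
    exact Finset.sum_nonneg fun B _ => hx0' B
  · exact ⟨x, hx0, hxb, hxe, rfl⟩

private lemma bcf_le {μ ν : Type*} [Fintype μ] [Fintype ν] [DecidableEq μ] [DecidableEq ν]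
    (M : Matrix μ ν ℝ) {x : Finset μ × Finset ν → ℝ}
    (hx0 : ∀ B, 0 ≤ x B) (hxb : ∀ B, ¬ IsBiclique M B → x B = 0)
    (hxe : ∀ i j, M i j = 1 →
      1 ≤ ∑ B : Finset μ × Finset ν, (if i ∈ B.1 ∧ j ∈ B.2 then x B else 0)) :
    bcf M ≤ ∑ B : Finset μ × Finset ν, x B := by
  apply csInf_le
  · refine ⟨0, ?_⟩
    rintro c ⟨x', hx0', -, -, rfl⟩
    exact Finset.sum_nonneg fun B _ => hx0' B
  · exact ⟨x, hx0, hxb, hxe, rfl⟩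

private lemma one_le_bpf {μ ν : Type*} [Fintype μ] [Fintype ν] [DecidableEq μ] [DecidableEq ν]
    (M : Matrix μ ν ℝ) (i : μ) (j : ν) (hij : M i j = 1) : 1 ≤ bpf M := by
  apply le_csInf
  · obtain ⟨x, h0, hb, he⟩ := bpf_feasible M
    exact ⟨_, x, h0, hb, he, rfl⟩
  · rintro c ⟨x, hx0, -, hxe, rfl⟩
    calc (1:ℝ) = ∑ B : Finset μ × Finset ν, (if i ∈ B.1 ∧ j ∈ B.2 then x B else 0) :=
          (hxe i j hij).symm
      _ ≤ ∑ B : Finset μ × Finset ν, x B :=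
          Finset.sum_le_sum fun B _ => by split; exacts [le_rfl, hx0 B]

/-- Projection of a biclique of `A ⊗ A'` onto the coordinates of `A`. -/
private def projFst {m m' n n' : Type*} [DecidableEq m] [DecidableEq n]
    (Bh : Finset (m × m') × Finset (n × n')) : Finset m × Finset n :=
  (Bh.1.image Prod.fst, Bh.2.image Prod.fst)

/-- The slice of a biclique of `A ⊗ A'` at a fixed edge `(i, j)` of `A`. -/
private def kslice {m m' n n' : Type*} [DecidableEq m] [DecidableEq n]
    [DecidableEq m'] [DecidableEq n'] (i : m) (j : n)
    (Bh : Finset (m × m') × Finset (n × n')) : Finset m' × Finset n' :=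
  ((Bh.1.filter (fun q => q.1 = i)).image Prod.snd,
   (Bh.2.filter (fun q => q.1 = j)).image Prod.snd)

private lemma mem_kslice_fst {m m' n n' : Type*} [DecidableEq m] [DecidableEq n]
    [DecidableEq m'] [DecidableEq n'] {i : m} {j : n}
    {Bh : Finset (m × m') × Finset (n × n')} {i' : m'} :
    i' ∈ (kslice i j Bh).1 ↔ (i, i') ∈ Bh.1 := by
  simp only [kslice, Finset.mem_image, Finset.mem_filter]
  constructor
  · rintro ⟨⟨a, b⟩, ⟨hq, rfl⟩, rfl⟩
    exact hq
  · intro h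
    exact ⟨(i, i'), ⟨h, rfl⟩, rfl⟩

private lemma mem_kslice_snd {m m' n n' : Type*} [DecidableEq m] [DecidableEq n]
    [DecidableEq m'] [DecidableEq n'] {i : m} {j : n}
    {Bh : Finset (m × m') × Finset (n × n')} {j' : n'} :
    j' ∈ (kslice i j Bh).2 ↔ (j, j') ∈ Bh.2 := by
  simp only [kslice, Finset.mem_image, Finset.mem_filter]
  constructor
  · rintro ⟨⟨a, b⟩, ⟨hq, rfl⟩, rfl⟩
    exact hq
  · intro h
    exact ⟨(j, j'), ⟨h, rfl⟩, rfl⟩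

private lemma mem_projFst_fst {m m' n n' : Type*} [DecidableEq m] [DecidableEq n]
    {Bh : Finset (m × m') × Finset (n × n')} {i : m} :
    i ∈ (projFst Bh).1 ↔ ∃ i', (i, i') ∈ Bh.1 := by
  simp only [projFst, Finset.mem_image]
  constructor
  · rintro ⟨⟨a, b⟩, hq, rfl⟩
    exact ⟨b, hq⟩
  · rintro ⟨i', h⟩
    exact ⟨(i, i'), h, rfl⟩

private lemma mem_projFst_snd {m m' n n' : Type*} [DecidableEq m] [DecidableEq n]
    {Bh : Finset (m × m') × Finset (n × n')} {j : n} :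
    j ∈ (projFst Bh).2 ↔ ∃ j', (j, j') ∈ Bh.2 := by
  simp only [projFst, Finset.mem_image]
  constructor
  · rintro ⟨⟨a, b⟩, hq, rfl⟩
    exact ⟨b, hq⟩
  · rintro ⟨j', h⟩
    exact ⟨(j, j'), h, rfl⟩

/-- Lower bound: `bpf (A ⊗ A') ≥ bcf A * bpf A'`. -/
theorem bpf_kronecker_ge {m n m' n' : Type*}
    [Fintype m] [Fintype n] [Fintype m'] [Fintype n']
    [DecidableEq m] [DecidableEq n] [DecidableEq m'] [DecidableEq n']
    (A : Matrix m n ℝ) (A' : Matrix m' n' ℝ)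
    (hA : IsBinary A) (hA' : IsBinary A') :
    bpf (A ⊗ₖ A') ≥ bcf A * bpf A' := by
  by_cases hE : ∃ i' j', A' i' j' = 1
  · obtain ⟨i0, j0, hij0⟩ := hE
    have hp1 : (1:ℝ) ≤ bpf A' := one_le_bpf A' i0 j0 hij0
    have hp0 : (0:ℝ) < bpf A' := lt_of_lt_of_le one_pos hp1
    rw [ge_iff_le]
    unfold bpf
    apply le_csInf
    · obtain ⟨x, h0', hb, he⟩ := bpf_feasible (A ⊗ₖ A')
      exact ⟨_, x, h0', hb, he, rfl⟩
    rintro c ⟨x, hx0, hxb, hxe, rfl⟩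
    have hxbic : ∀ Bh, x Bh ≠ 0 → IsBiclique (A ⊗ₖ A') Bh := by
      intro Bh h
      by_contra hc
      exact h (hxb Bh hc)
    set p : ℝ := bpf A' with hp
    set y : Finset m × Finset n → ℝ :=
      fun B => p⁻¹ * ∑ Bh, (if projFst Bh = B then x Bh else 0) with hy
    have hy0 : ∀ B, 0 ≤ y B := by
      intro B
      exact mul_nonneg (inv_nonneg.mpr hp0.le)
        (Finset.sum_nonneg fun Bh _ => by split; exacts [hx0 Bh, le_rfl])
    have hyb : ∀ B, ¬ IsBiclique A B → y B = 0 := by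
      intro B hB
      have hterm : ∀ Bh : Finset (m × m') × Finset (n × n'),
          (if projFst Bh = B then x Bh else 0) = 0 := by
        intro Bh
        split
        case isTrue h =>
          by_contra hne
          apply hB
          rw [← h]
          obtain ⟨⟨q1, hq1⟩, ⟨q2, hq2⟩, hST⟩ := hxbic Bh hne
          refine ⟨⟨q1.1, mem_projFst_fst.mpr ⟨q1.2, by simpa using hq1⟩⟩,
            ⟨q2.1, mem_projFst_snd.mpr ⟨q2.2, by simpa using hq2⟩⟩, ?_⟩
          intro a ha b hb
          rw [mem_projFst_fst] at ha
          rw [mem_projFst_snd] at hb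
          obtain ⟨a', ha'⟩ := ha
          obtain ⟨b', hb'⟩ := hb
          have he := hST (a, a') ha' (b, b') hb'
          rw [Matrix.kroneckerMap_apply] at he
          exact (binary_mul_one (hA a b) (hA' a' b') he).1
        case isFalse h => rfl
      simp only [hy]
      rw [Finset.sum_congr rfl fun Bh _ => hterm Bh, Finset.sum_const_zero, mul_zero]
    have hye : ∀ i j, A i j = 1 →
        1 ≤ ∑ B : Finset m × Finset n, (if i ∈ B.1 ∧ j ∈ B.2 then y B else 0) := by
      intro i j hij
      set x' : Finset (m × m') × Finset (n × n') → ℝ :=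
        fun Bh => if i ∈ (projFst Bh).1 ∧ j ∈ (projFst Bh).2 then x Bh else 0 with hx'
      have hx'0 : ∀ Bh, 0 ≤ x' Bh := by
        intro Bh
        simp only [hx']
        split
        · exact hx0 Bh
        · exact le_rfl
      set z : Finset m' × Finset n' → ℝ :=
        fun B' => ∑ Bh, (if kslice i j Bh = B' then x' Bh else 0) with hz
      have hz0 : ∀ B', 0 ≤ z B' := by
        intro B'
        refine Finset.sum_nonneg fun Bh _ => ?_
        split
        · exact hx'0 Bh
        · exact le_rfl
      have hzb : ∀ B', ¬ IsBiclique A' B' → z B' = 0 := by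
        intro B' hB'
        apply Finset.sum_eq_zero
        intro Bh _
        split
        case isTrue hs =>
          simp only [hx']
          split
          case isTrue hq =>
            by_contra hne
            apply hB'
            rw [← hs]
            obtain ⟨hi, hj⟩ := hq
            rw [mem_projFst_fst] at hi
            rw [mem_projFst_snd] at hj
            obtain ⟨i', hi'⟩ := hi
            obtain ⟨j', hj'⟩ := hj
            obtain ⟨-, -, hST⟩ := hxbic Bh hne
            refine ⟨⟨i', mem_kslice_fst.mpr hi'⟩, ⟨j', mem_kslice_snd.mpr hj'⟩, ?_⟩
            intro a ha b hb
            rw [mem_kslice_fst] at ha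
            rw [mem_kslice_snd] at hb
            have he := hST (i, a) ha (j, b) hb
            rw [Matrix.kroneckerMap_apply] at he
            exact (binary_mul_one (hA i j) (hA' a b) he).2
          case isFalse hq => rfl
        case isFalse hs => rfl
      have hze : ∀ i' j', A' i' j' = 1 →
          ∑ B' : Finset m' × Finset n', (if i' ∈ B'.1 ∧ j' ∈ B'.2 then z B' else 0) = 1 := by
        intro i' j' hij'
        have e3 : ∑ B' : Finset m' × Finset n',
              (if i' ∈ B'.1 ∧ j' ∈ B'.2 then (∑ Bh, (if kslice i j Bh = B' then x' Bh else 0)) else 0)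
            = ∑ Bh, (if i' ∈ (kslice i j Bh).1 ∧ j' ∈ (kslice i j Bh).2 then x' Bh else 0) :=
          sum_proj_collapse (kslice i j) x' (fun B' => i' ∈ B'.1 ∧ j' ∈ B'.2)
        calc ∑ B' : Finset m' × Finset n', (if i' ∈ B'.1 ∧ j' ∈ B'.2 then z B' else 0)
            = ∑ Bh, (if i' ∈ (kslice i j Bh).1 ∧ j' ∈ (kslice i j Bh).2 then x' Bh else 0) := by
              rw [← e3]
          _ = ∑ Bh, (if (i, i') ∈ Bh.1 ∧ (j, j') ∈ Bh.2 then x Bh else 0) := by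
              refine Finset.sum_congr rfl fun Bh _ => ?_
              by_cases hmem : (i, i') ∈ Bh.1 ∧ (j, j') ∈ Bh.2
              · rw [if_pos ⟨mem_kslice_fst.mpr hmem.1, mem_kslice_snd.mpr hmem.2⟩, if_pos hmem]
                simp only [hx']
                rw [if_pos ⟨mem_projFst_fst.mpr ⟨i', hmem.1⟩, mem_projFst_snd.mpr ⟨j', hmem.2⟩⟩]
              · rw [if_neg, if_neg hmem]
                intro hc
                exact hmem ⟨mem_kslice_fst.mp hc.1, mem_kslice_snd.mp hc.2⟩
          _ = 1 := hxe (i, i') (j, j') (by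
                rw [Matrix.kroneckerMap_apply, hij, hij', one_mul])
      have hple : p ≤ ∑ Bh, x' Bh := by
        calc p ≤ ∑ B' : Finset m' × Finset n', z B' := bpf_le A' hz0 hzb hze
          _ = ∑ Bh, x' Bh := by
            simp only [hz]
            exact sum_proj_total (kslice i j) x'
      have e1 : ∑ B : Finset m × Finset n, (if i ∈ B.1 ∧ j ∈ B.2 then y B else 0)
          = p⁻¹ * ∑ B : Finset m × Finset n,
              (if i ∈ B.1 ∧ j ∈ B.2 then (∑ Bh, (if projFst Bh = B then x Bh else 0)) else 0) := by
        rw [Finset.mul_sum]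
        refine Finset.sum_congr rfl fun B _ => ?_
        simp only [hy]
        split
        · rfl
        · rw [mul_zero]
      have e2 : ∑ B : Finset m × Finset n,
            (if i ∈ B.1 ∧ j ∈ B.2 then (∑ Bh, (if projFst Bh = B then x Bh else 0)) else 0)
          = ∑ Bh, x' Bh := by
        simp only [hx']
        exact sum_proj_collapse projFst x (fun B => i ∈ B.1 ∧ j ∈ B.2)
      rw [e1, e2]
      have hone : (1:ℝ) = p⁻¹ * p := by
        field_simp
      rw [hone]
      exact mul_le_mul_of_nonneg_left hple (inv_nonneg.mpr hp0.le)
    have hsum : ∑ B : Finset m × Finset n, y B = p⁻¹ * ∑ Bh, x Bh := by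
      simp only [hy]
      rw [← Finset.mul_sum]
      congr 1
      exact sum_proj_total projFst x
    have hbcf : bcf A ≤ p⁻¹ * ∑ Bh, x Bh := hsum ▸ bcf_le A hy0 hyb hye
    calc bcf A * p ≤ (p⁻¹ * ∑ Bh, x Bh) * p := mul_le_mul_of_nonneg_right hbcf hp0.le
      _ = ∑ Bh, x Bh := by
        field_simp
  · have h0 : bpf A' ≤ 0 := by
      have h := bpf_le A' (x := fun _ => (0:ℝ)) (fun _ => le_rfl) (fun _ _ => rfl)
        (fun i j hij => absurd ⟨i, j, hij⟩ hE)
      simpa using h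
    rw [le_antisymm h0 (bpf_nonneg A'), mul_zero]
    exact bpf_nonneg _
end

section
/- The asymptotic fractional biclique partition number of the Domino satisfies 2 ≤ bp_f^∞(D) ≤ (bp_f(D^{⊗5}))^{1/5}; in particular, using bp_f(D^{⊗2}) = 6, bp_f^∞(D) ≤ 6^{1/2} < 5/2 = bp_f(D), so the asymptotic fractional binary rank of the Domino is strictly smaller than its fractional binary rank. -/
open Matrix Kronecker BigOperators Filter

/-- The asymptotic fractional biclique partition number of the Domino. -/
noncomputable def bpfInfty : ℝ :=
  sInf { x : ℝ | ∃ k : ℕ, 1 ≤ k ∧ x = (bpf (kronPow D k)) ^ ((1 : ℝ) / k) }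

set_option maxRecDepth 100000

namespace DominoAux

open Finset

section Generic

variable {m n : Type*} [Fintype m] [Fintype n] [DecidableEq m] [DecidableEq n]

/-- The feasible-value set of the fractional biclique partition LP. -/
def bpfSet (A : Matrix m n ℝ) : Set ℝ :=
  { c : ℝ | ∃ x : Finset m × Finset n → ℝ,
    (∀ B, 0 ≤ x B) ∧ (∀ B, ¬ IsBiclique A B → x B = 0) ∧
    (∀ i j, A i j = 1 →
      ∑ B : Finset m × Finset n, (if i ∈ B.1 ∧ j ∈ B.2 then x B else 0) = 1) ∧
    c = ∑ B : Finset m × Finset n, x B }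

lemma bpf_eq_sInf (A : Matrix m n ℝ) : bpf A = sInf (bpfSet A) := rfl

lemma bpfSet_nonneg (A : Matrix m n ℝ) : ∀ c ∈ bpfSet A, 0 ≤ c := by
  rintro c ⟨x, hx0, -, -, rfl⟩
  exact Finset.sum_nonneg fun B _ => hx0 B

lemma bpfSet_bddBelow (A : Matrix m n ℝ) : BddBelow (bpfSet A) :=
  ⟨0, fun c hc => bpfSet_nonneg A c hc⟩

lemma bpf_nonneg (A : Matrix m n ℝ) : 0 ≤ bpf A := by
  rw [bpf_eq_sInf]
  exact Real.sInf_nonneg (bpfSet_nonneg A)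

lemma bpfSet_nonempty (A : Matrix m n ℝ) : (bpfSet A).Nonempty := by
  classical
  refine ⟨_, fun B => if ∃ p : m × n, A p.1 p.2 = 1 ∧ B = ({p.1}, {p.2}) then 1 else 0,
    fun B => ?_, fun B hB => ?_, fun i j hij => ?_, rfl⟩
  · dsimp only
    split <;> norm_num
  · dsimp only
    rw [if_neg]
    rintro ⟨p, hp, rfl⟩
    exact hB ⟨Finset.singleton_nonempty _, Finset.singleton_nonempty _, by
      intro i hi j hj
      rw [Finset.mem_singleton] at hi hj
      rw [hi, hj]; exact hp⟩
  · dsimp only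
    rw [Finset.sum_eq_single_of_mem (({i}, {j}) : Finset m × Finset n) (Finset.mem_univ _)]
    · rw [if_pos ⟨Finset.mem_singleton_self i, Finset.mem_singleton_self j⟩,
        if_pos ⟨(i, j), hij, rfl⟩]
    · intro B _ hne
      by_cases hc : i ∈ B.1 ∧ j ∈ B.2
      · rw [if_pos hc, if_neg]
        rintro ⟨p, -, rfl⟩
        rw [Finset.mem_singleton] at hc
        obtain ⟨hc1, hc2⟩ := hc
        rw [Finset.mem_singleton] at hc2
        exact hne (by rw [← hc1, ← hc2])
      · rw [if_neg hc]

/-- Primal feasible solutions upper bound `bpf`. -/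
lemma bpf_le (A : Matrix m n ℝ) (x : Finset m × Finset n → ℝ)
    (h0 : ∀ B, 0 ≤ x B) (h1 : ∀ B, ¬ IsBiclique A B → x B = 0)
    (h2 : ∀ i j, A i j = 1 →
      ∑ B : Finset m × Finset n, (if i ∈ B.1 ∧ j ∈ B.2 then x B else 0) = 1) :
    bpf A ≤ ∑ B : Finset m × Finset n, x B := by
  rw [bpf_eq_sInf]
  exact csInf_le (bpfSet_bddBelow A) ⟨x, h0, h1, h2, rfl⟩

/-- Dual feasible solutions lower bound `bpf`. -/
lemma le_bpf (A : Matrix m n ℝ) (y : m × n → ℝ)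
    (hy0 : ∀ p : m × n, A p.1 p.2 ≠ 1 → y p = 0)
    (hyB : ∀ B : Finset m × Finset n, IsBiclique A B →
      ∑ p : m × n, (if p.1 ∈ B.1 ∧ p.2 ∈ B.2 then y p else 0) ≤ 1) :
    ∑ p : m × n, y p ≤ bpf A := by
  rw [bpf_eq_sInf]
  apply le_csInf (bpfSet_nonempty A)
  rintro c ⟨x, hx0, hxs, hxc, rfl⟩
  have key : ∀ p : m × n,
      y p = ∑ B : Finset m × Finset n, (if p.1 ∈ B.1 ∧ p.2 ∈ B.2 then y p * x B else 0) := by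
    intro p
    have e1 : ∀ B : Finset m × Finset n,
        (if p.1 ∈ B.1 ∧ p.2 ∈ B.2 then y p * x B else 0)
          = y p * (if p.1 ∈ B.1 ∧ p.2 ∈ B.2 then x B else 0) := by
      intro B; by_cases h : p.1 ∈ B.1 ∧ p.2 ∈ B.2 <;> simp [h]
    rw [Finset.sum_congr rfl fun B _ => e1 B, ← Finset.mul_sum]
    by_cases h : A p.1 p.2 = 1
    · rw [hxc _ _ h, mul_one]
    · rw [hy0 p h, zero_mul]
  calc ∑ p : m × n, y p
      = ∑ p : m × n, ∑ B : Finset m × Finset n,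
          (if p.1 ∈ B.1 ∧ p.2 ∈ B.2 then y p * x B else 0) :=
        Finset.sum_congr rfl fun p _ => key p
    _ = ∑ B : Finset m × Finset n, ∑ p : m × n,
          (if p.1 ∈ B.1 ∧ p.2 ∈ B.2 then y p * x B else 0) := Finset.sum_comm
    _ ≤ ∑ B : Finset m × Finset n, x B := by
        apply Finset.sum_le_sum
        intro B _
        have e2 : ∀ p : m × n,
            (if p.1 ∈ B.1 ∧ p.2 ∈ B.2 then y p * x B else 0)
              = (if p.1 ∈ B.1 ∧ p.2 ∈ B.2 then y p else 0) * x B := by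
          intro p; by_cases h : p.1 ∈ B.1 ∧ p.2 ∈ B.2 <;> simp [h]
        rw [Finset.sum_congr rfl fun p _ => e2 p, ← Finset.sum_mul]
        by_cases hB : IsBiclique A B
        · exact mul_le_of_le_one_left (hx0 B) (hyB B hB)
        · rw [hxs B hB, mul_zero]

/-- Push a real cast through a sum of `if`s with integer values. -/
lemma cast_ite_sum {β : Type*} (L : Finset β) (c : β → Prop) [DecidablePred c] (f : β → ℤ) :
    ((∑ p ∈ L, if c p then f p else 0 : ℤ) : ℝ) = ∑ p ∈ L, if c p then (f p : ℝ) else 0 := by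
  rw [Int.cast_sum]
  exact Finset.sum_congr rfl fun p _ => by split <;> simp

lemma ite_div' {c : Prop} [Decidable c] (a d : ℝ) :
    (if c then a / d else 0) = (if c then a else 0) / d := by
  split <;> simp

/-- A finitely supported weighting given by a list of (support, numerator) pairs with
common denominator `d`. -/
noncomputable def suppFun {α : Type*} [DecidableEq α] (L : Finset (α × ℤ)) (d : ℝ) : α → ℝ :=
  fun a => (∑ p ∈ L, if p.1 = a then (p.2 : ℝ) else 0) / d

lemma suppFun_nonneg {α : Type*} [DecidableEq α] (L : Finset (α × ℤ)) (d : ℝ)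
    (hd : 0 ≤ d) (hL : ∀ p ∈ L, 0 ≤ p.2) (a : α) : 0 ≤ suppFun L d a := by
  apply div_nonneg _ hd
  apply Finset.sum_nonneg
  intro p hp
  split
  · exact_mod_cast hL p hp
  · exact le_rfl

lemma suppFun_eq_zero {α : Type*} [DecidableEq α] (L : Finset (α × ℤ)) (d : ℝ)
    (Q : α → Prop) (hL : ∀ p ∈ L, Q p.1) (a : α) (ha : ¬ Q a) : suppFun L d a = 0 := by
  unfold suppFun
  rw [Finset.sum_eq_zero, zero_div]
  intro p hp
  rw [if_neg]
  intro h
  exact ha (h ▸ hL p hp)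

lemma sum_ite_suppFun {α : Type*} [Fintype α] [DecidableEq α] (L : Finset (α × ℤ)) (d : ℝ)
    (P : α → Prop) [DecidablePred P] :
    ∑ a : α, (if P a then suppFun L d a else 0)
      = (∑ p ∈ L, if P p.1 then (p.2 : ℝ) else 0) / d := by
  unfold suppFun
  have e1 : ∀ a : α, (if P a then (∑ p ∈ L, if p.1 = a then (p.2 : ℝ) else 0) / d else 0)
      = (∑ p ∈ L, if p.1 = a then (if P a then (p.2 : ℝ) else 0) else 0) / d := by
    intro a
    rw [ite_div']
    congr 1
    split
    · rfl
    · exact (Finset.sum_eq_zero fun p _ => by split <;> rfl).symm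
  rw [Finset.sum_congr rfl fun a _ => e1 a, ← Finset.sum_div, Finset.sum_comm]
  congr 1
  refine Finset.sum_congr rfl fun p _ => ?_
  rw [Finset.sum_ite_eq Finset.univ p.1 (fun a => if P a then (p.2 : ℝ) else 0),
    if_pos (Finset.mem_univ _)]

lemma sum_suppFun {α : Type*} [Fintype α] [DecidableEq α] (L : Finset (α × ℤ)) (d : ℝ) :
    ∑ a : α, suppFun L d a = (∑ p ∈ L, (p.2 : ℝ)) / d := by
  have := sum_ite_suppFun L d (fun _ : α => True)
  simpa using this

end Generic

/-! ### Concrete facts about the Domino matrix -/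

def Dz : Fin 3 → Fin 3 → ℤ := fun i j => if (i = 0 ∧ j = 2) ∨ (i = 2 ∧ j = 0) then 0 else 1

lemma D_cast : ∀ i j, D i j = ((Dz i j : ℤ) : ℝ) := by
  intro i j
  fin_cases i <;> fin_cases j <;>
    simp [D, Dz, Matrix.cons_val_zero, Matrix.cons_val_one, Matrix.head_cons,
      Matrix.cons_val_two, Matrix.tail_cons, Matrix.head_fin_const, Matrix.vecHead,
      Matrix.vecTail] <;> norm_num

lemma D_eq_one_iff (i j : Fin 3) : D i j = 1 ↔ Dz i j = 1 := by
  rw [D_cast]; exact_mod_cast Iff.rfl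

lemma D_diag (a : Fin 3) (h : a ≠ 1) : D a a = 1 := by
  have h' : Dz a a = 1 := by revert h; revert a; decide
  rw [D_cast, h']; norm_num

lemma D_off (a b : Fin 3) (ha : a ≠ 1) (hb : b ≠ 1) (hab : a ≠ b) : D a b = 0 := by
  have h' : Dz a b = 0 := by revert ha hb hab; revert a b; decide
  rw [D_cast, h']; norm_num

/-! ### The fooling-set lower bound `2^k ≤ bpf (D^{⊗k})` -/

lemma kronPow_diag_one (k : ℕ) (f : Fin k → Fin 3) (hf : ∀ t, f t ≠ 1) :
    kronPow D k f f = 1 := by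
  unfold kronPow
  exact Finset.prod_eq_one fun t _ => D_diag (f t) (hf t)

lemma kronPow_off_zero (k : ℕ) (f g : Fin k → Fin 3) (hf : ∀ t, f t ≠ 1)
    (hg : ∀ t, g t ≠ 1) (hfg : f ≠ g) : kronPow D k f g = 0 := by
  obtain ⟨t, ht⟩ := Function.ne_iff.mp hfg
  unfold kronPow
  exact Finset.prod_eq_zero (Finset.mem_univ t) (D_off (f t) (g t) (hf t) (hg t) ht)

lemma two_pow_le_bpf (k : ℕ) : (2 : ℝ) ^ k ≤ bpf (kronPow D k) := by
  classical
  set Fl : Finset (Fin k → Fin 3) := Finset.univ.filter (fun f => ∀ t, f t ≠ 1) with hFl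
  set Fd : Finset ((Fin k → Fin 3) × (Fin k → Fin 3)) := Fl.image (fun f => (f, f)) with hFd
  have hmemFl : ∀ f : Fin k → Fin 3, f ∈ Fl ↔ ∀ t, f t ≠ 1 := by
    intro f; simp [hFl]
  have hmemFd : ∀ p : (Fin k → Fin 3) × (Fin k → Fin 3),
      p ∈ Fd ↔ ∃ f, (∀ t, f t ≠ 1) ∧ (f, f) = p := by
    intro p
    simp only [hFd, Finset.mem_image, hmemFl]
  have hcard : Fd.card = 2 ^ k := by
    rw [hFd, Finset.card_image_of_injective _ (fun a b h => (Prod.mk.injEq _ _ _ _).mp h |>.1)]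
    have : Fl = Fintype.piFinset (fun _ : Fin k => ({0, 2} : Finset (Fin 3))) := by
      ext f
      rw [hmemFl, Fintype.mem_piFinset]
      have h3 : ∀ a : Fin 3, a ∈ ({0, 2} : Finset (Fin 3)) ↔ a ≠ 1 := by decide
      exact forall_congr' fun t => (h3 (f t)).symm
    rw [this, Fintype.card_piFinset]
    simp
  have hy0 : ∀ p : (Fin k → Fin 3) × (Fin k → Fin 3), kronPow D k p.1 p.2 ≠ 1 →
      (if p ∈ Fd then (1:ℝ) else 0) = 0 := by
    intro p hp
    rw [if_neg]
    intro hpF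
    obtain ⟨f, hf, rfl⟩ := (hmemFd p).mp hpF
    exact hp (kronPow_diag_one k f hf)
  have hyB : ∀ B : Finset (Fin k → Fin 3) × Finset (Fin k → Fin 3), IsBiclique (kronPow D k) B →
      ∑ p : (Fin k → Fin 3) × (Fin k → Fin 3),
        (if p.1 ∈ B.1 ∧ p.2 ∈ B.2 then (if p ∈ Fd then (1:ℝ) else 0) else 0) ≤ 1 := by
    intro B hB
    have e1 : ∀ p : (Fin k → Fin 3) × (Fin k → Fin 3),
        (if p.1 ∈ B.1 ∧ p.2 ∈ B.2 then (if p ∈ Fd then (1 : ℝ) else 0) else 0)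
          = (if p ∈ Fd ∧ p.1 ∈ B.1 ∧ p.2 ∈ B.2 then (1 : ℝ) else 0) := by
      intro p
      by_cases h1 : p.1 ∈ B.1 ∧ p.2 ∈ B.2 <;> by_cases h2 : p ∈ Fd <;> simp [h1, h2]
    rw [Finset.sum_congr rfl fun p _ => e1 p, Finset.sum_boole]
    have hle : (Finset.univ.filter
        (fun p : (Fin k → Fin 3) × (Fin k → Fin 3) => p ∈ Fd ∧ p.1 ∈ B.1 ∧ p.2 ∈ B.2)).card ≤ 1 := by
      apply Finset.card_le_one.mpr
      intro p hp q hq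
      rw [Finset.mem_filter] at hp hq
      obtain ⟨-, hpF, hp1, hp2⟩ := hp
      obtain ⟨-, hqF, hq1, hq2⟩ := hq
      obtain ⟨f, hf, rfl⟩ := (hmemFd p).mp hpF
      obtain ⟨g, hg, rfl⟩ := (hmemFd q).mp hqF
      by_cases hfg : f = g
      · rw [hfg]
      · exfalso
        have h1 : kronPow D k f g = 1 := hB.2.2 f hp1 g hq2
        rw [kronPow_off_zero k f g hf hg hfg] at h1
        norm_num at h1
    calc ((Finset.univ.filter _).card : ℝ) ≤ ((1:ℕ) : ℝ) := by exact_mod_cast hle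
      _ = 1 := by norm_num
  have key := le_bpf (kronPow D k) (fun p => if p ∈ Fd then 1 else 0) hy0 hyB
  have hsum : ∑ p : (Fin k → Fin 3) × (Fin k → Fin 3), (if p ∈ Fd then (1 : ℝ) else 0)
      = (Fd.card : ℝ) := by
    rw [Finset.sum_ite_mem, Finset.univ_inter, Finset.sum_const, nsmul_eq_mul, mul_one]
  rw [hsum, hcard] at key
  exact_mod_cast key

/-! ### `bpf D = 5/2` -/

def LfD : Finset ((Finset (Fin 3) × Finset (Fin 3)) × ℤ) :=
  {(({0}, {0, 1}), 1), (({1}, {0, 2}), 1), (({0, 1}, {0, 1}), 1),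
   (({2}, {1, 2}), 1), (({1, 2}, {1, 2}), 1)}

def yzD : Fin 3 × Fin 3 → ℤ := fun p =>
  if p = (1, 1) then -1 else if Dz p.1 p.2 = 1 then 1 else 0

lemma bpf_D_le : bpf D ≤ 5 / 2 := by
  have h0 : ∀ B, 0 ≤ suppFun LfD (2 : ℝ) B :=
    suppFun_nonneg _ _ (by norm_num) (by decide)
  have h1 : ∀ B, ¬ IsBiclique D B → suppFun LfD (2 : ℝ) B = 0 := by
    intro B hB
    apply suppFun_eq_zero LfD 2 (IsBiclique D) _ B hB
    have hz : ∀ p ∈ LfD, p.1.1.Nonempty ∧ p.1.2.Nonempty ∧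
        ∀ i ∈ p.1.1, ∀ j ∈ p.1.2, Dz i j = 1 := by decide
    intro p hp
    obtain ⟨e1, e2, e3⟩ := hz p hp
    exact ⟨e1, e2, fun i hi j hj => (D_eq_one_iff i j).mpr (e3 i hi j hj)⟩
  have h2 : ∀ i j, D i j = 1 →
      ∑ B : Finset (Fin 3) × Finset (Fin 3),
        (if i ∈ B.1 ∧ j ∈ B.2 then suppFun LfD (2 : ℝ) B else 0) = 1 := by
    have hz : ∀ i j : Fin 3, Dz i j = 1 →
        (∑ p ∈ LfD, if i ∈ p.1.1 ∧ j ∈ p.1.2 then p.2 else 0) = 2 := by decide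
    intro i j hij
    rw [sum_ite_suppFun, ← cast_ite_sum, hz i j ((D_eq_one_iff i j).mp hij)]
    norm_num
  have := bpf_le D (suppFun LfD 2) h0 h1 h2
  rw [sum_suppFun, ← Int.cast_sum] at this
  have hz : (∑ p ∈ LfD, p.2) = 5 := by decide
  rw [hz] at this
  norm_num at this
  linarith

lemma le_bpf_D : 5 / 2 ≤ bpf D := by
  have hy0 : ∀ p : Fin 3 × Fin 3, D p.1 p.2 ≠ 1 → ((yzD p : ℝ) / 2) = 0 := by
    intro p hp
    have hz : ∀ p : Fin 3 × Fin 3, Dz p.1 p.2 ≠ 1 → yzD p = 0 := by decide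
    rw [hz p, Int.cast_zero, zero_div]
    intro h
    exact hp ((D_eq_one_iff p.1 p.2).mpr h)
  have hyB : ∀ B : Finset (Fin 3) × Finset (Fin 3), IsBiclique D B →
      ∑ p : Fin 3 × Fin 3, (if p.1 ∈ B.1 ∧ p.2 ∈ B.2 then (yzD p : ℝ) / 2 else 0) ≤ 1 := by
    intro B hB
    have hz : ∀ B : Finset (Fin 3) × Finset (Fin 3),
        (B.1.Nonempty ∧ B.2.Nonempty ∧ ∀ i ∈ B.1, ∀ j ∈ B.2, Dz i j = 1) →
        (∑ p : Fin 3 × Fin 3, if p.1 ∈ B.1 ∧ p.2 ∈ B.2 then yzD p else 0) ≤ 2 := by decide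
    have hBz : B.1.Nonempty ∧ B.2.Nonempty ∧ ∀ i ∈ B.1, ∀ j ∈ B.2, Dz i j = 1 :=
      ⟨hB.1, hB.2.1, fun i hi j hj => (D_eq_one_iff i j).mp (hB.2.2 i hi j hj)⟩
    have e : ∀ p : Fin 3 × Fin 3,
        (if p.1 ∈ B.1 ∧ p.2 ∈ B.2 then (yzD p : ℝ) / 2 else 0)
          = (if p.1 ∈ B.1 ∧ p.2 ∈ B.2 then (yzD p : ℝ) else 0) / 2 := fun p => ite_div' _ _
    rw [Finset.sum_congr rfl fun p _ => e p, ← Finset.sum_div, ← cast_ite_sum]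
    have h2 : ((∑ p : Fin 3 × Fin 3, if p.1 ∈ B.1 ∧ p.2 ∈ B.2 then yzD p else 0 : ℤ) : ℝ) ≤ 2 := by
      exact_mod_cast hz B hBz
    linarith
  have key := le_bpf D (fun p => (yzD p : ℝ) / 2) hy0 hyB
  have hz : (∑ p : Fin 3 × Fin 3, yzD p) = 5 := by decide
  rw [← Finset.sum_div, ← Int.cast_sum, hz] at key
  norm_num at key
  linarith

lemma bpf_D : bpf D = 5 / 2 := le_antisymm bpf_D_le le_bpf_D

/-! ### `bpf (D^{⊗2}) = 6` -/

abbrev S2 := Fin 2 → Fin 3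

def A2z : S2 → S2 → ℤ := fun i j => Dz (i 0) (j 0) * Dz (i 1) (j 1)

lemma kron2_cast (i j : S2) : kronPow D 2 i j = ((A2z i j : ℤ) : ℝ) := by
  unfold kronPow A2z
  rw [Fin.prod_univ_two, D_cast (i 0) (j 0), D_cast (i 1) (j 1)]
  push_cast
  ring

lemma kron2_eq_one_iff (i j : S2) : kronPow D 2 i j = 1 ↔ A2z i j = 1 := by
  rw [kron2_cast]; exact_mod_cast Iff.rfl

def Lf : Finset ((Finset S2 × Finset S2) × ℤ) :=
  {(({![1,0],![1,1],![2,0],![2,1]},{![1,0],![2,0],![2,1]}),1539),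
   (({![0,2],![1,1],![1,2]},{![0,1],![0,2]}),64),
   (({![0,0],![1,0]},{![0,0],![0,1],![1,1]}),410),
   (({![0,1],![0,2],![1,2]},{![0,1],![0,2],![1,2]}),1751),
   (({![1,1],![1,2]},{![0,2],![1,1],![2,2]}),227),
   (({![0,1],![1,1]},{![0,0],![0,2],![1,0]}),692),
   (({![1,0],![1,1]},{![0,0],![2,0]}),589),
   (({![0,2],![1,1],![2,1],![2,2]},{![1,1],![1,2]}),64),
   (({![0,2],![1,2]},{![0,1],![0,2],![1,1]}),692),
   (({![1,0],![1,1],![2,0]},{![1,1],![2,0],![2,1]}),884),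
   (({![0,1],![0,2],![1,1]},{![0,2],![1,1],![1,2]}),1405),
   (({![0,1],![0,2],![1,1]},{![0,1],![0,2],![1,2]}),346),
   (({![0,0],![0,1]},{![0,0],![0,1],![1,0]}),41),
   (({![0,1],![0,2],![1,2]},{![0,1],![0,2],![1,1],![1,2]}),410),
   (({![0,0],![0,1],![1,0]},{![0,0],![0,1],![1,0],![1,1]}),41),
   (({![1,1],![2,1]},{![1,2],![2,0],![2,2]}),1070),
   (({![1,0]},{![0,0],![0,1],![2,0],![2,1]}),350),
   (({![0,0],![0,1],![1,1]},{![0,0],![1,0],![1,1]}),898),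
   (({![1,1],![1,2],![2,0],![2,2]},{![1,1],![2,1]}),61),
   (({![1,0],![2,0],![2,1]},{![1,0],![2,0],![2,1]}),534),
   (({![1,2],![2,0],![2,2]},{![1,1],![2,1]}),166),
   (({![2,1],![2,2]},{![1,2],![2,1],![2,2]}),378),
   (({![0,0],![0,1],![1,0]},{![0,0],![1,0]}),507),
   (({![0,0],![1,0]},{![0,0],![0,1],![1,0],![1,1]}),692),
   (({![0,0],![0,1],![1,0],![1,1]},{![0,0],![0,1]}),1158),
   (({![0,0],![0,1],![2,0],![2,1]},{![1,0],![1,1]}),1568),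
   (({![0,1],![0,2],![2,2]},{![1,1],![1,2]}),692),
   (({![2,0],![2,2]},{![1,1],![2,1]}),123),
   (({![1,0],![2,0],![2,2]},{![1,1],![2,1]}),1023),
   (({![1,2],![2,1],![2,2]},{![1,1],![1,2],![2,1],![2,2]}),2129),
   (({![0,0],![0,1],![1,0],![1,1]},{![0,0],![0,1],![1,0]}),1267),
   (({![1,0],![1,1],![2,0]},{![2,0],![2,1]}),250),
   (({![2,0],![2,1]},{![1,0],![1,1],![2,0]}),321),
   (({![0,0],![0,2],![1,0]},{![0,1],![1,1]}),869),
   (({![0,0],![0,2],![1,0],![1,2]},{![0,1],![1,1]}),227),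
   (({![1,1],![2,1],![2,2]},{![1,2],![2,2]}),1373),
   (({![0,0],![0,2],![1,1]},{![0,1],![1,1]}),309),
   (({![0,2],![1,1],![1,2]},{![0,1],![0,2],![1,1],![1,2]}),346),
   (({![0,1],![1,1]},{![0,0],![0,2],![1,2]}),410),
   (({![1,1],![1,2]},{![0,1],![0,2],![2,1],![2,2]}),1524),
   (({![1,1],![1,2],![2,2]},{![1,1],![2,1],![2,2]}),756),
   (({![1,0],![2,0],![2,1]},{![1,0],![1,1],![2,0]}),434),
   (({![1,1],![2,0],![2,1]},{![1,0],![2,0]}),618),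
   (({![1,0],![2,0],![2,1]},{![1,1],![2,0],![2,1]}),434),
   (({![1,2],![2,2]},{![1,2],![2,1],![2,2]}),378),
   (({![1,1],![2,1]},{![1,1],![2,0],![2,2]}),64)}

def Lpos : List (S2 × S2) :=
  [(![0,0],![0,1]),(![0,0],![1,0]),(![0,1],![0,0]),(![0,1],![0,2]),(![0,2],![0,1]),(![0,2],![1,2]),
   (![1,0],![0,0]),(![1,0],![2,0]),(![1,2],![0,2]),(![1,2],![2,2]),(![2,0],![1,0]),(![2,0],![2,1]),
   (![2,1],![2,0]),(![2,1],![2,2]),(![2,2],![1,2]),(![2,2],![2,1])]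

def Lneg : List (S2 × S2) := [(![0,1],![0,1]),(![1,0],![1,0]),(![1,2],![1,2]),(![2,1],![2,1])]

def yz2 : S2 × S2 → ℤ := fun p => if p ∈ Lpos then 1 else if p ∈ Lneg then -1 else 0

lemma bpf_kron2_le : bpf (kronPow D 2) ≤ 6 := by
  have h0 : ∀ B, 0 ≤ suppFun Lf (5014 : ℝ) B :=
    suppFun_nonneg _ _ (by norm_num) (by decide)
  have h1 : ∀ B, ¬ IsBiclique (kronPow D 2) B → suppFun Lf (5014 : ℝ) B = 0 := by
    intro B hB
    apply suppFun_eq_zero Lf 5014 (IsBiclique (kronPow D 2)) _ B hB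
    have hz : ∀ p ∈ Lf, p.1.1.Nonempty ∧ p.1.2.Nonempty ∧
        ∀ i ∈ p.1.1, ∀ j ∈ p.1.2, A2z i j = 1 := by
      set_option synthInstance.maxSize 1024 in decide
    intro p hp
    obtain ⟨e1, e2, e3⟩ := hz p hp
    exact ⟨e1, e2, fun i hi j hj => (kron2_eq_one_iff i j).mpr (e3 i hi j hj)⟩
  have h2 : ∀ i j, kronPow D 2 i j = 1 →
      ∑ B : Finset S2 × Finset S2,
        (if i ∈ B.1 ∧ j ∈ B.2 then suppFun Lf (5014 : ℝ) B else 0) = 1 := by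
    have hz : ∀ i j : S2, A2z i j = 1 →
        (∑ p ∈ Lf, if i ∈ p.1.1 ∧ j ∈ p.1.2 then p.2 else 0) = 5014 := by decide
    intro i j hij
    rw [sum_ite_suppFun, ← cast_ite_sum, hz i j ((kron2_eq_one_iff i j).mp hij)]
    norm_num
  have := bpf_le (kronPow D 2) (suppFun Lf 5014) h0 h1 h2
  rw [sum_suppFun, ← Int.cast_sum] at this
  have hz : (∑ p ∈ Lf, p.2) = 30084 := by decide
  rw [hz] at this
  norm_num at this
  linarith

lemma le_bpf_kron2 : 6 ≤ bpf (kronPow D 2) := by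
  have hy0 : ∀ p : S2 × S2, kronPow D 2 p.1 p.2 ≠ 1 → ((yz2 p : ℝ) / 2) = 0 := by
    intro p hp
    have hz : ∀ p : S2 × S2, A2z p.1 p.2 ≠ 1 → yz2 p = 0 := by decide
    rw [hz p, Int.cast_zero, zero_div]
    intro h
    exact hp ((kron2_eq_one_iff p.1 p.2).mpr h)
  have hyB : ∀ B : Finset S2 × Finset S2, IsBiclique (kronPow D 2) B →
      ∑ p : S2 × S2, (if p.1 ∈ B.1 ∧ p.2 ∈ B.2 then (yz2 p : ℝ) / 2 else 0) ≤ 1 := by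
    intro B hB
    -- the key reduction: it is enough to check, for each row set `R`, the positive parts
    have hz : ∀ R : Finset S2, ∑ j : S2,
        (if ∀ i ∈ R, A2z i j = 1 then max (∑ i ∈ R, yz2 (i, j)) 0 else 0) ≤ 2 := by decide
    obtain ⟨R, C⟩ := B
    have hsub : ∀ j ∈ C, ∀ i ∈ R, A2z i j = 1 := fun j hj i hi =>
      (kron2_eq_one_iff i j).mp (hB.2.2 i hi j hj)
    have e : ∀ p : S2 × S2,
        (if p.1 ∈ R ∧ p.2 ∈ C then (yz2 p : ℝ) / 2 else 0)
          = (if p.1 ∈ R ∧ p.2 ∈ C then (yz2 p : ℝ) else 0) / 2 := fun p => ite_div' _ _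
    rw [Finset.sum_congr rfl fun p _ => e p, ← Finset.sum_div, ← cast_ite_sum]
    have hint : (∑ p : S2 × S2, if p.1 ∈ R ∧ p.2 ∈ C then yz2 p else 0) ≤ 2 := by
      have e3 : (∑ p : S2 × S2, if p.1 ∈ R ∧ p.2 ∈ C then yz2 p else 0)
          = ∑ p : S2 × S2, if p ∈ R ×ˢ C then yz2 p else 0 := by
        refine Finset.sum_congr rfl fun p _ => ?_
        exact (if_congr Finset.mem_product rfl rfl).symm
      have e2 : (∑ p : S2 × S2, if p.1 ∈ R ∧ p.2 ∈ C then yz2 p else 0)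
          = ∑ j ∈ C, ∑ i ∈ R, yz2 (i, j) := by
        rw [e3, Finset.sum_ite_mem, Finset.univ_inter, Finset.sum_product]
        exact Finset.sum_comm
      rw [e2]
      calc ∑ j ∈ C, ∑ i ∈ R, yz2 (i, j)
          ≤ ∑ j ∈ C, max (∑ i ∈ R, yz2 (i, j)) 0 :=
            Finset.sum_le_sum fun j _ => le_max_left _ _
        _ ≤ ∑ j ∈ Finset.univ.filter (fun j => ∀ i ∈ R, A2z i j = 1),
              max (∑ i ∈ R, yz2 (i, j)) 0 := by
            apply Finset.sum_le_sum_of_subset_of_nonneg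
            · intro j hj
              rw [Finset.mem_filter]
              exact ⟨Finset.mem_univ _, hsub j hj⟩
            · intro j _ _
              exact le_max_right _ _
        _ = ∑ j : S2, (if ∀ i ∈ R, A2z i j = 1 then max (∑ i ∈ R, yz2 (i, j)) 0 else 0) :=
            Finset.sum_filter _ _
        _ ≤ 2 := hz R
    have h2 : ((∑ p : S2 × S2, if p.1 ∈ R ∧ p.2 ∈ C then yz2 p else 0 : ℤ) : ℝ) ≤ 2 := by
      exact_mod_cast hint
    linarith
  have key := le_bpf (kronPow D 2) (fun p => (yz2 p : ℝ) / 2) hy0 hyB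
  have hz : (∑ p : S2 × S2, yz2 p) = 12 := by decide
  rw [← Finset.sum_div, ← Int.cast_sum, hz] at key
  norm_num at key
  linarith

lemma bpf_kron2 : bpf (kronPow D 2) = 6 := le_antisymm bpf_kron2_le le_bpf_kron2

end DominoAux

/-- Bounds on the asymptotic fractional biclique partition number of the Domino:
`2 ≤ bpf^∞(D) ≤ bpf(D^{⊗5})^{1/5}`, and in particular
`bpf^∞(D) ≤ 6^{1/2} < 5/2 = bpf D`. -/
theorem domino_asymptotic_bounds :
    2 ≤ bpfInfty ∧
    bpfInfty ≤ (bpf (kronPow D 5)) ^ ((1 : ℝ) / 5) ∧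
    bpf (kronPow D 2) = 6 ∧
    bpfInfty ≤ (6 : ℝ) ^ ((1 : ℝ) / 2) ∧
    (6 : ℝ) ^ ((1 : ℝ) / 2) < 5 / 2 ∧
    bpf D = 5 / 2 := by
  classical
  have h5 : bpf (kronPow D 2) = 6 := DominoAux.bpf_kron2
  have h6 : bpf D = 5 / 2 := DominoAux.bpf_D
  have hbdd : BddBelow {x : ℝ | ∃ k : ℕ, 1 ≤ k ∧ x = (bpf (kronPow D k)) ^ ((1 : ℝ) / k)} := by
    refine ⟨0, ?_⟩
    rintro x ⟨k, hk, rfl⟩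
    exact Real.rpow_nonneg (DominoAux.bpf_nonneg _) _
  have hlow : ∀ k : ℕ, 1 ≤ k → (2 : ℝ) ≤ (bpf (kronPow D k)) ^ ((1 : ℝ) / k) := by
    intro k hk
    have hk0 : (k : ℝ) ≠ 0 := Nat.cast_ne_zero.mpr (by omega)
    have h1 : (2 : ℝ) ^ k ≤ bpf (kronPow D k) := DominoAux.two_pow_le_bpf k
    have h2 : ((2 : ℝ) ^ k) ^ ((1 : ℝ) / k) ≤ (bpf (kronPow D k)) ^ ((1 : ℝ) / k) :=
      Real.rpow_le_rpow (by positivity) h1 (by positivity)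
    calc (2 : ℝ) = ((2 : ℝ) ^ k) ^ ((1 : ℝ) / k) := by
          rw [← Real.rpow_natCast 2 k, ← Real.rpow_mul (by norm_num : (0:ℝ) ≤ 2),
            mul_one_div, div_self hk0, Real.rpow_one]
      _ ≤ _ := h2
  have hsqrt : (6 : ℝ) ^ ((1 : ℝ) / 2) < 5 / 2 := by
    have hnn : 0 ≤ (6 : ℝ) ^ ((1 : ℝ) / 2) := Real.rpow_nonneg (by norm_num) _
    have hsq : ((6 : ℝ) ^ ((1 : ℝ) / 2)) ^ (2 : ℕ) = 6 := by
      rw [← Real.rpow_natCast ((6:ℝ) ^ ((1:ℝ)/2)) 2, ← Real.rpow_mul (by norm_num : (0:ℝ) ≤ 6)]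
      norm_num
    nlinarith [hsq, hnn]
  refine ⟨?_, ?_, h5, ?_, hsqrt, h6⟩
  · have hne : {x : ℝ | ∃ k : ℕ, 1 ≤ k ∧ x = (bpf (kronPow D k)) ^ ((1 : ℝ) / k)}.Nonempty :=
      ⟨(bpf (kronPow D 1)) ^ ((1 : ℝ) / 1), 1, le_rfl, by norm_num⟩
    apply le_csInf hne
    rintro x ⟨k, hk, rfl⟩
    exact hlow k hk
  · apply csInf_le hbdd
    exact ⟨5, by norm_num, by norm_num⟩
  · have hmem : (6 : ℝ) ^ ((1 : ℝ) / 2)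
        ∈ {x : ℝ | ∃ k : ℕ, 1 ≤ k ∧ x = (bpf (kronPow D k)) ^ ((1 : ℝ) / k)} := by
      exact ⟨2, by norm_num, by rw [h5]; norm_num⟩
    exact csInf_le hbdd hmem
end
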